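/- arXiv:1806.03269 — 7 statements merged into one kernel-verified Lean document; each statement's English description precedes it below -/
import Mathlib

section
/- Let 0 < α < 1, B > 0, T > 0 and let m be a positive integer with mα > 2. Then the function z : [0,T] → ℝ defined by z(t) = ∑_{n=m+1}^∞ (−B)^n t^{αn} / Γ(αn + 1) is twice continuously differentiable on [0,T] (i.e. z ∈ C²[0,T], with one-sided derivatives at the endpoints). -/
/-!
Every term `t ↦ c n * t ^ β n` with `β n ≥ k` is `C^k` on all of `ℝ`, and differentiating it once
turns `(c n, β n)` into `(c n * β n, β n - 1)`. So a series of such terms is `C^k` as soon as, on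
every interval `(-R, R)`, the terms are dominated by the summable sequence `|c n| β n ^ k R ^ β n`
(induction on `k`, differentiating term by term under these uniform bounds). For the Mittag-Leffler
tail, `β n = α (m + 1 + n) ≥ mα > 2`, and the domination follows from `z ^ b / Γ(b + 1) ≤ C(z)`
for `b ≥ 1` (compare `Γ(b + 1)` with `⌊b⌋!`), applied with a doubled base so that a geometric
factor `2 ^ (-b)` is left over.
-/

open Real Set Filter

lemma abs_rpow_le_rpow_of_abs_le {x q b R : ℝ} (hR : 1 ≤ R) (hx : |x| ≤ R) (hq : 0 ≤ q)
    (hqb : q ≤ b) : |x ^ q| ≤ R ^ b :=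
  calc |x ^ q| ≤ |x| ^ q := abs_rpow_le_abs_rpow x q
    _ ≤ R ^ q := rpow_le_rpow (abs_nonneg x) hx hq
    _ ≤ R ^ b := rpow_le_rpow_of_exponent_le hR hqb

lemma mem_Ioo_neg_abs_add_one (x : ℝ) : x ∈ Ioo (-(|x| + 1)) (|x| + 1) :=
  abs_lt.1 (lt_add_one _)

/-- For `x < 0`, `x ^ β n` is Mathlib's `|x| ^ β n * cos (π β n)`; its derivative is still
`β n * x ^ (β n - 1)` when `1 ≤ β n`, so the series is studied on all of `ℝ`. -/
noncomputable def rpowSeries (c β : ℕ → ℝ) (x : ℝ) : ℝ := ∑' n, c n * x ^ β n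

namespace rpowSeries

variable {c β : ℕ → ℝ}

theorem continuous (hβ : ∀ n, 0 ≤ β n) (hs : ∀ R, 1 ≤ R → Summable fun n => |c n| * R ^ β n) :
    Continuous (rpowSeries c β) := by
  refine continuous_iff_continuousAt.2 fun x => ?_
  set R := |x| + 1
  have hR : 1 ≤ R := le_add_of_nonneg_left (abs_nonneg x)
  have hcont : ContinuousOn (rpowSeries c β) (Ioo (-R) R) := by
    refine continuousOn_tsum (fun n => ((continuous_rpow_const (hβ n)).const_mul _).continuousOn)
      (hs R hR) fun n y hy => ?_
    rw [norm_mul, Real.norm_eq_abs, Real.norm_eq_abs]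
    gcongr
    exact abs_rpow_le_rpow_of_abs_le hR (abs_le.2 ⟨hy.1.le, hy.2.le⟩) (hβ n) le_rfl
  exact hcont.continuousAt (isOpen_Ioo.mem_nhds (mem_Ioo_neg_abs_add_one x))

theorem hasDerivAt (hβ : ∀ n, 1 ≤ β n)
    (hs : ∀ R, 1 ≤ R → Summable fun n => |c n| * β n * R ^ β n) (x : ℝ) :
    HasDerivAt (rpowSeries c β) (rpowSeries (fun n => c n * β n) (fun n => β n - 1) x) x := by
  set R := |x| + 1
  have hR : 1 ≤ R := le_add_of_nonneg_left (abs_nonneg x)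
  have hterm : ∀ n y, HasDerivAt (fun t => c n * t ^ β n) (c n * β n * y ^ (β n - 1)) y :=
    fun n y => by
      simpa only [mul_assoc] using (hasDerivAt_rpow_const (Or.inr (hβ n))).const_mul (c n)
  have hbound : ∀ n, ∀ y ∈ Ioo (-R) R, ‖c n * β n * y ^ (β n - 1)‖ ≤ |c n| * β n * R ^ β n := by
    intro n y hy
    have hβ0 : 0 ≤ β n := zero_le_one.trans (hβ n)
    rw [norm_mul, norm_mul, Real.norm_eq_abs, Real.norm_eq_abs, Real.norm_eq_abs,
      abs_of_nonneg hβ0]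
    refine mul_le_mul_of_nonneg_left ?_ (mul_nonneg (abs_nonneg _) hβ0)
    exact abs_rpow_le_rpow_of_abs_le hR (abs_le.2 ⟨hy.1.le, hy.2.le⟩) (by linarith [hβ n])
      (by linarith)
  have hzero : Summable fun n => c n * (0 : ℝ) ^ β n :=
    summable_zero.congr fun n => by
      rw [zero_rpow (zero_lt_one.trans_le (hβ n)).ne', mul_zero]
  exact hasDerivAt_tsum_of_isPreconnected (hs R hR) isOpen_Ioo isPreconnected_Ioo
    (fun n y _ => hterm n y) hbound ⟨by linarith, by linarith⟩ hzero
    (mem_Ioo_neg_abs_add_one x)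

theorem contDiff (k : ℕ) (hβ : ∀ n, (k : ℝ) ≤ β n)
    (hs : ∀ R, 1 ≤ R → Summable fun n => |c n| * β n ^ k * R ^ β n) :
    ContDiff ℝ k (rpowSeries c β) := by
  induction k generalizing c β with
  | zero =>
    exact contDiff_zero.2 (rpowSeries.continuous (by simpa using hβ) (by simpa using hs))
  | succ k ih =>
    have hβ1 : ∀ n, 1 ≤ β n := fun n => le_trans (by simp) (hβ n)
    have hderiv := hasDerivAt (c := c) hβ1 fun R hR =>
      (hs R hR).of_nonneg_of_le (fun n => by have := hβ1 n; positivity) fun n => by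
        have := hβ1 n
        gcongr
        exact le_self_pow₀ (hβ1 n) k.succ_ne_zero
    rw [Nat.cast_succ, contDiff_succ_iff_deriv]
    refine ⟨fun x => (hderiv x).differentiableAt, by simp, ?_⟩
    rw [show deriv (rpowSeries c β) = _ from funext fun x => (hderiv x).deriv]
    refine ih (fun n => by linarith [hβ n, Nat.cast_succ (R := ℝ) k])
      fun R hR => (hs R hR).of_nonneg_of_le (fun n => ?_) fun n => ?_
    · have := hβ1 n
      have : 0 ≤ β n - 1 := by linarith
      positivity
    · have := hβ1 n
      calc |c n * β n| * (β n - 1) ^ k * R ^ (β n - 1)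
          ≤ |c n| * β n * β n ^ k * R ^ β n := by
            rw [abs_mul, abs_of_nonneg (show 0 ≤ β n by linarith)]
            gcongr <;> linarith
        _ = |c n| * β n ^ (k + 1) * R ^ β n := by ring

end rpowSeries

lemma rpow_div_Gamma_le {z b : ℝ} (hz : 0 ≤ z) (hb : 1 ≤ b) :
    z ^ b / Gamma (b + 1) ≤ (z + 1) * exp (z + 1) := by
  set N := ⌊b⌋₊
  have hN : 1 ≤ N := Nat.le_floor (by exact_mod_cast hb)
  have hNb : (N : ℝ) ≤ b := Nat.floor_le (by linarith)
  have hbN : b ≤ N + 1 := (Nat.lt_floor_add_one b).le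
  have hN1 : (2 : ℝ) ≤ N + 1 := by
    have : (1 : ℝ) ≤ N := by exact_mod_cast hN
    linarith
  have hΓ : (N.factorial : ℝ) ≤ Gamma (b + 1) := by
    rw [← Gamma_nat_eq_factorial]
    exact Gamma_strictMonoOn_Ici.monotoneOn (mem_Ici.2 hN1) (mem_Ici.2 (by linarith))
      (by linarith)
  have hpow : z ^ b ≤ (z + 1) ^ (N + 1) :=
    calc z ^ b ≤ (z + 1) ^ b := rpow_le_rpow hz (by linarith) (by linarith)
      _ ≤ (z + 1) ^ ((N : ℝ) + 1) := rpow_le_rpow_of_exponent_le (by linarith) hbN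
      _ = (z + 1) ^ (N + 1) := by exact_mod_cast rpow_natCast (z + 1) (N + 1)
  calc z ^ b / Gamma (b + 1) ≤ (z + 1) ^ (N + 1) / N.factorial :=
        div_le_div₀ (by positivity) hpow (by positivity) hΓ
    _ = (z + 1) * ((z + 1) ^ N / N.factorial) := by rw [pow_succ]; ring
    _ ≤ (z + 1) * exp (z + 1) := by
        gcongr
        exact pow_div_factorial_le_exp _ (by linarith) N

lemma summable_pow_mul_div_Gamma {a y : ℝ} (ha : 0 < a) (hy : 0 ≤ y) (k : ℕ) :
    Summable fun n : ℕ => y ^ n * (a * n) ^ k / Gamma (a * n + 1) := by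
  set z := 2 * exp 1 * y ^ (1 / a)
  set r := (1 / 2 : ℝ) ^ a
  have hz : 0 ≤ z := by positivity
  have hr : r < 1 := rpow_lt_one (by norm_num) (by norm_num) ha
  have hbound : ∀ n : ℕ, 1 ≤ a * n →
      ‖y ^ n * (a * n) ^ k / Gamma (a * n + 1)‖ ≤ k.factorial * ((z + 1) * exp (z + 1)) * r ^ n := by
    intro n hn
    set b := a * (n : ℝ)
    have hΓ : 0 < Gamma (b + 1) := Gamma_pos_of_pos (by linarith)
    have hpoly : b ^ k ≤ k.factorial * exp b := by
      have := pow_div_factorial_le_exp b (by linarith) k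
      rw [div_le_iff₀ (by positivity)] at this
      linarith
    have hsplit : y ^ n * exp b = z ^ b * r ^ n := by
      have hy' : (y ^ (1 / a)) ^ b = y ^ n := by
        rw [← rpow_mul hy, show 1 / a * b = n by simp only [b]; field_simp, rpow_natCast]
      have hr' : r ^ n = (1 / 2 : ℝ) ^ b := by
        rw [← rpow_natCast, ← rpow_mul (by norm_num)]
      have h2 : (2 : ℝ) ^ b * (1 / 2 : ℝ) ^ b = 1 := by
        rw [← mul_rpow (by norm_num) (by norm_num)]; norm_num
      rw [hr', mul_rpow (by positivity) (by positivity), mul_rpow (by norm_num) (by positivity),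
        exp_one_rpow, hy']
      linear_combination (exp b * y ^ n) * h2.symm
    rw [Real.norm_of_nonneg (by positivity)]
    calc y ^ n * b ^ k / Gamma (b + 1) ≤ y ^ n * (k.factorial * exp b) / Gamma (b + 1) := by
          gcongr
      _ = k.factorial * (z ^ b / Gamma (b + 1)) * r ^ n := by
          rw [← mul_assoc, mul_comm _ (k.factorial : ℝ), mul_assoc, hsplit]; ring
      _ ≤ k.factorial * ((z + 1) * exp (z + 1)) * r ^ n := by
          gcongr
          exact rpow_div_Gamma_le hz hn
  refine Summable.of_norm_bounded_eventually_nat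
    ((summable_geometric_of_lt_one (by positivity) hr).mul_left
      (k.factorial * ((z + 1) * exp (z + 1)))) ?_
  filter_upwards [(tendsto_natCast_atTop_atTop.const_mul_atTop ha).eventually_ge_atTop 1]
    with n hn using hbound n hn

lemma summable_abs_pow_div_Gamma_mul_rpow {a R : ℝ} (ha : 0 < a) (hR : 0 ≤ R) (B : ℝ)
    (m k : ℕ) :
    Summable fun n : ℕ => |(-B) ^ (m + 1 + n) / Gamma (a * ((m : ℝ) + 1 + n) + 1)| *
      (a * ((m : ℝ) + 1 + n)) ^ k * R ^ (a * ((m : ℝ) + 1 + n)) := by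
  refine ((summable_nat_add_iff (m + 1)).2
    (summable_pow_mul_div_Gamma ha (by positivity : 0 ≤ |B| * R ^ a) k)).congr fun n => ?_
  have hΓ : 0 < Gamma (a * ((m : ℝ) + 1 + n) + 1) := Gamma_pos_of_pos (by positivity)
  have hR' : R ^ (a * ((m : ℝ) + 1 + n)) = (R ^ a) ^ (n + (m + 1)) := by
    rw [← rpow_natCast, ← rpow_mul hR]
    push_cast
    ring_nf
  rw [abs_div, abs_of_pos hΓ, abs_pow, abs_neg, hR', mul_pow]
  push_cast
  ring_nf

theorem tail_contDiffOn_two_general (α B T : ℝ) (m : ℕ)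
    (hmα : 2 < m * α) :
    ContDiffOn ℝ 2
      (fun t : ℝ => ∑' n : ℕ,
        (-B) ^ (m + 1 + n) * t ^ (α * ((m : ℝ) + 1 + n)) /
          Real.Gamma (α * ((m : ℝ) + 1 + n) + 1))
      (Set.Icc 0 T) := by
  have hα : 0 < α := pos_of_mul_pos_right (two_pos.trans hmα) m.cast_nonneg
  have hβ : ∀ n : ℕ, ((2 : ℕ) : ℝ) ≤ α * ((m : ℝ) + 1 + n) := fun n => by
    have : 0 ≤ α * n := by positivity
    push_cast
    linarith
  have hs := fun R (hR : 1 ≤ R) =>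
    summable_abs_pow_div_Gamma_mul_rpow hα (zero_le_one.trans hR) B m 2
  convert (rpowSeries.contDiff 2 hβ hs).contDiffOn (s := Icc 0 T) using 1
  · norm_num
  · funext t
    simp only [rpowSeries, div_mul_eq_mul_div]

/-- Theorem 2 of the paper: the tail `z(t) = ∑_{n=m+1}^∞ (−B)^n t^{αn} / Γ(αn+1)` of the
Mittag-Leffler series is twice continuously differentiable on `[0,T]` when `mα > 2`. -/
theorem tail_contDiffOn_two (α B T : ℝ) (m : ℕ)
    (hα0 : 0 < α) (hα1 : α < 1) (hB : 0 < B) (hT : 0 < T)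
    (hm : 0 < m) (hmα : 2 < m * α) :
    ContDiffOn ℝ 2
      (fun t : ℝ => ∑' n : ℕ,
        (-B) ^ (m + 1 + n) * t ^ (α * ((m : ℝ) + 1 + n)) /
          Real.Gamma (α * ((m : ℝ) + 1 + n) + 1))
      (Set.Icc 0 T) :=
  tail_contDiffOn_two_general α B T m hmα
end

section
/- Let 0 < α < 1, B > 0, T > 0 and let m be a positive integer with mα > 3. Then the function z : [0,T] → ℝ defined by z(t) = ∑_{n=m+1}^∞ (−B)^n t^{αn} / Γ(αn + 1) is three times continuously differentiable on [0,T] (i.e. z ∈ C³[0,T], with one-sided derivatives at the endpoints). -/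
/-!
The `n`-th term `c n * t ^ γ n`, with `γ n = α (m + 1 + n) ≥ 3`, has `k`-th derivative
`c n * γ n (γ n - 1) ⋯ (γ n - k + 1) * t ^ (γ n - k)`. For `k ≤ 3` and `|t| < R` (`R ≥ 1`) these are
all bounded by `|c n| (γ n + 1)³ R ^ γ n`, which is summable by the ratio test since
`Γ(x) / Γ(x + α) → 0` (log-convexity of `Γ`). So the series may be differentiated termwise
three times.
-/

open Real Set Filter Topology

section SmoothSeries

variable {ι 𝕜 F : Type*} [RCLike 𝕜] [NormedAddCommGroup F] [NormedSpace 𝕜 F] [CompleteSpace F]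
  {s : Set 𝕜} {u : ι → ℝ}

theorem hasDerivAt_tsum_of_isOpen (hs : IsOpen s) (hu : Summable u) {g g' : ι → 𝕜 → F}
    (hg : ∀ i, ∀ y ∈ s, HasDerivAt (g i) (g' i y) y) (hg' : ∀ i, ∀ y ∈ s, ‖g' i y‖ ≤ u i)
    (hg0 : ∀ y ∈ s, Summable fun i ↦ g i y) {x : 𝕜} (hx : x ∈ s) :
    HasDerivAt (fun y ↦ ∑' i, g i y) (∑' i, g' i x) x := by
  obtain ⟨ε, hε, hball⟩ := Metric.isOpen_iff.1 hs x hx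
  exact hasDerivAt_tsum_of_isPreconnected hu Metric.isOpen_ball (convex_ball x ε).isPreconnected
    (fun i y hy ↦ hg i y (hball hy)) (fun i y hy ↦ hg' i y (hball hy)) (Metric.mem_ball_self hε)
    (hg0 x hx) (Metric.mem_ball_self hε)

theorem contDiffOn_tsum_of_hasDerivAt (hs : IsOpen s) (hu : Summable u) {N : ℕ}
    {f : ℕ → ι → 𝕜 → F} (hf : ∀ k < N, ∀ i, ∀ x ∈ s, HasDerivAt (f k i) (f (k + 1) i x) x)
    (hfu : ∀ k ≤ N, ∀ i, ∀ x ∈ s, ‖f k i x‖ ≤ u i) (hcont : ∀ i, ContinuousOn (f N i) s) :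
    ContDiffOn 𝕜 N (fun x ↦ ∑' i, f 0 i x) s := by
  induction N generalizing f with
  | zero => exact contDiffOn_zero.2 (continuousOn_tsum hcont hu (hfu 0 le_rfl))
  | succ N ih =>
    have hderiv : ∀ x ∈ s, HasDerivAt (fun y ↦ ∑' i, f 0 i y) (∑' i, f 1 i x) x :=
      fun x hx ↦ hasDerivAt_tsum_of_isOpen hs hu (hf 0 N.succ_pos) (hfu 1 (by omega))
        (fun y hy ↦ .of_norm_bounded hu fun i ↦ hfu 0 (Nat.zero_le _) i y hy) hx
    rw [Nat.cast_succ, contDiffOn_succ_iff_deriv_of_isOpen hs]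
    refine ⟨fun x hx ↦ (hderiv x hx).differentiableAt.differentiableWithinAt, by simp, ?_⟩
    refine (ih (f := fun k ↦ f (k + 1)) (fun k hk ↦ hf (k + 1) (by omega))
      (fun k hk ↦ hfu (k + 1) (by omega)) hcont).congr fun x hx ↦ (hderiv x hx).deriv

end SmoothSeries

theorem descPochhammer_eval_le_pow {S : Type*} [CommRing S] [PartialOrder S]
    [IsStrictOrderedRing S] {n : ℕ} {s : S} (h : n - 1 ≤ s) :
    (descPochhammer S n).eval s ≤ s ^ n := by
  rw [descPochhammer_eval_eq_prod_range]
  calc ∏ j ∈ Finset.range n, (s - j) ≤ ∏ _j ∈ Finset.range n, s :=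
        Finset.prod_le_prod (fun j hj ↦ sub_nonneg.2 ?_) fun j _ ↦ sub_le_self s j.cast_nonneg
    _ = s ^ n := by simp
  calc (j : S) ≤ n - 1 := le_sub_iff_add_le.2 (by exact_mod_cast Finset.mem_range.1 hj)
    _ ≤ s := h

theorem hasDerivAt_descPochhammer_eval_mul_rpow {p : ℝ} {k : ℕ} (hk : k + 1 ≤ p) (x : ℝ) :
    HasDerivAt (fun t ↦ (descPochhammer ℝ k).eval p * t ^ (p - k))
      ((descPochhammer ℝ (k + 1)).eval p * x ^ (p - ↑(k + 1))) x := by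
  have h := ((hasDerivAt_rpow_const (x := x) (p := p - k) (Or.inr (by linarith))).const_mul
    ((descPochhammer ℝ k).eval p))
  refine h.congr_deriv ?_
  rw [descPochhammer_succ_eval, Nat.cast_succ, ← sub_sub]
  ring

theorem abs_descPochhammer_eval_mul_rpow_le {p R t : ℝ} {k N : ℕ} (hkN : k ≤ N) (hkp : k ≤ p)
    (hR : 1 ≤ R) (ht : |t| ≤ R) :
    |(descPochhammer ℝ k).eval p * t ^ (p - k)| ≤ (p + 1) ^ N * R ^ p := by
  have hp : 0 ≤ p := k.cast_nonneg.trans hkp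
  rw [abs_mul, abs_of_nonneg (descPochhammer_nonneg (by linarith))]
  gcongr
  · calc (descPochhammer ℝ k).eval p ≤ p ^ k := descPochhammer_eval_le_pow (by linarith)
      _ ≤ (p + 1) ^ k := by gcongr; linarith
      _ ≤ (p + 1) ^ N := pow_le_pow_right₀ (by linarith) hkN
  · calc |t ^ (p - k)| ≤ |t| ^ (p - k) := abs_rpow_le_abs_rpow t _
      _ ≤ R ^ (p - k) := by gcongr
      _ ≤ R ^ p := rpow_le_rpow_of_exponent_le hR (by linarith [k.cast_nonneg (α := ℝ)])

theorem Real.Gamma_add_one_le_Gamma_add_mul_rpow {s a : ℝ} (hs : 0 < s) (ha₀ : 0 < a)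
    (ha₁ : a < 1) : Gamma (s + 1) ≤ Gamma (s + a) * (s + a) ^ (1 - a) := by
  have hsa : 0 < s + a := by linarith
  have hΓ : 0 ≤ Gamma (s + a) := (Gamma_pos_of_pos hsa).le
  have h := Gamma_mul_add_mul_le_rpow_Gamma_mul_rpow_Gamma hsa (by linarith : 0 < s + a + 1)
    ha₀ (by linarith : 0 < 1 - a) (by ring)
  rwa [show a * (s + a) + (1 - a) * (s + a + 1) = s + 1 by ring, Gamma_add_one hsa.ne',
    mul_rpow hsa.le hΓ, ← mul_assoc, mul_comm _ ((s + a) ^ _), mul_assoc, ← rpow_add' hΓ (by simp),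
    add_sub_cancel, rpow_one, mul_comm] at h

theorem Real.tendsto_Gamma_div_Gamma_add_atTop {a : ℝ} (ha : 0 < a) :
    Tendsto (fun s ↦ Gamma s / Gamma (s + a)) atTop (𝓝 0) := by
  -- `Γ` is increasing on `[2, ∞)`, so it suffices to compare with `Γ (s + b)` for some `b < 1`.
  set b := min a (1 / 2)
  have hb₀ : 0 < b := lt_min ha one_half_pos
  have hb₁ : b < 1 := (min_le_right _ _).trans_lt one_half_lt_one
  have hlim : Tendsto (fun s ↦ (s + b) ^ (-b) * (1 + b / s)) atTop (𝓝 0) := by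
    have h₁ : Tendsto (fun s : ℝ ↦ 1 + b / s) atTop (𝓝 (1 + 0)) :=
      tendsto_const_nhds.add (tendsto_const_nhds.div_atTop tendsto_id)
    simpa using
      ((tendsto_rpow_neg_atTop hb₀).comp (tendsto_atTop_add_const_right _ b tendsto_id)).mul h₁
  refine squeeze_zero' ?_ ((eventually_ge_atTop 2).mono fun s hs ↦ ?_) hlim
  · filter_upwards [eventually_gt_atTop 0] with s hs
    exact div_nonneg (Gamma_pos_of_pos hs).le (Gamma_pos_of_pos (by linarith)).le
  have hs₀ : 0 < s := by linarith
  have hsb : 0 < s + b := by linarith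
  have hΓb : 0 < Gamma (s + b) := Gamma_pos_of_pos hsb
  have hmono : Gamma (s + b) ≤ Gamma (s + a) :=
    Gamma_strictMonoOn_Ici.monotoneOn (mem_Ici.2 (by linarith)) (mem_Ici.2 (by linarith))
      (by gcongr; exact min_le_left _ _)
  have hstep := Gamma_add_one_le_Gamma_add_mul_rpow hs₀ hb₀ hb₁
  rw [Gamma_add_one hs₀.ne'] at hstep
  calc Gamma s / Gamma (s + a) ≤ Gamma s / Gamma (s + b) := by gcongr
    _ ≤ (s + b) ^ (1 - b) / s := by
        rw [div_le_div_iff₀ hΓb hs₀]; linarith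
    _ = (s + b) ^ (-b) * (1 + b / s) := by
        rw [sub_eq_add_neg, rpow_add hsb, rpow_one]; field_simp

theorem summable_pow_mul_pow_div_Gamma {α : ℝ} (hα : 0 < α) (β x : ℝ) (k : ℕ) :
    Summable fun n : ℕ ↦ x ^ n * (α * n + β) ^ k / Gamma (α * n + β) := by
  rcases eq_or_ne x 0 with rfl | hx
  · exact (summable_nat_add_iff 1).1 (by simp [summable_zero])
  set y : ℕ → ℝ := fun n ↦ α * n + β
  have hy : Tendsto y atTop atTop :=
    tendsto_atTop_add_const_right _ _ (tendsto_natCast_atTop_atTop.const_mul_atTop hα)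
  have hlim : Tendsto (fun n ↦ |x| * ((1 + α / y n) ^ k * (Gamma (y n) / Gamma (y n + α))))
      atTop (𝓝 0) := by
    simpa using tendsto_const_nhds.mul
      (((tendsto_const_nhds.add (tendsto_const_nhds.div_atTop hy)).pow k).mul
        ((tendsto_Gamma_div_Gamma_add_atTop hα).comp hy))
  refine summable_of_ratio_test_tendsto_lt_one zero_lt_one ?_ (hlim.congr' ?_)
  · filter_upwards [hy.eventually_gt_atTop 0] with n hn
    exact div_ne_zero (mul_ne_zero (pow_ne_zero _ hx) (pow_ne_zero _ hn.ne'))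
      (Gamma_pos_of_pos hn).ne'
  · filter_upwards [hy.eventually_gt_atTop 0] with n hn
    have hsucc : α * ((n + 1 : ℕ) : ℝ) + β = y n + α := by push_cast; ring
    have hΓ := Gamma_pos_of_pos hn
    have hΓ' := Gamma_pos_of_pos (by linarith : 0 < y n + α)
    rw [hsucc, norm_div, norm_div, norm_mul, norm_mul, norm_pow, norm_pow, norm_pow, norm_pow,
      Real.norm_of_nonneg hΓ.le, Real.norm_of_nonneg hΓ'.le, Real.norm_of_nonneg hn.le,
      Real.norm_of_nonneg (by linarith : 0 ≤ y n + α), Real.norm_eq_abs, one_add_div hn.ne',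
      div_pow]
    field_simp
    ring

theorem contDiffOn_tsum_mul_rpow {ι : Type*} {c γ : ι → ℝ} {N : ℕ} {R : ℝ} (hR : 1 ≤ R)
    (hγ : ∀ i, N ≤ γ i) (hsum : Summable fun i ↦ |c i| * ((γ i + 1) ^ N * R ^ γ i)) :
    ContDiffOn ℝ N (fun t ↦ ∑' i, c i * t ^ γ i) (Ioo (-R) R) := by
  set f : ℕ → ι → ℝ → ℝ := fun k i t ↦ c i * ((descPochhammer ℝ k).eval (γ i) * t ^ (γ i - k))
  have hf : ContDiffOn ℝ N (fun t ↦ ∑' i, f 0 i t) (Ioo (-R) R) := by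
    refine contDiffOn_tsum_of_hasDerivAt isOpen_Ioo hsum (fun k hk i x _ ↦ ?_)
      (fun k hk i x hx ↦ ?_) fun i ↦ ?_
    · have : (k : ℝ) + 1 ≤ N := by exact_mod_cast hk
      exact (hasDerivAt_descPochhammer_eval_mul_rpow (this.trans (hγ i)) x).const_mul (c i)
    · have : (k : ℝ) ≤ N := by exact_mod_cast hk
      rw [norm_mul, Real.norm_eq_abs, Real.norm_eq_abs]
      gcongr
      exact abs_descPochhammer_eval_mul_rpow_le hk (this.trans (hγ i)) hR
        (abs_le.2 ⟨hx.1.le, hx.2.le⟩)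
    · exact (continuous_const.mul (continuous_const.mul
        (continuous_rpow_const (sub_nonneg.2 (hγ i))))).continuousOn
  refine hf.congr fun t _ ↦ tsum_congr fun i ↦ ?_
  simp [f]

theorem tail_contDiffOn_three_general (α B T : ℝ) (m : ℕ)
    (hmα : 3 < m * α) :
    ContDiffOn ℝ 3
      (fun t : ℝ => ∑' n : ℕ,
        (-B) ^ (m + 1 + n) * t ^ (α * ((m : ℝ) + 1 + n)) /
          Real.Gamma (α * ((m : ℝ) + 1 + n) + 1))
      (Set.Icc 0 T) := by
  have hα : 0 < α := pos_of_mul_pos_right (by linarith) m.cast_nonneg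
  set R := |T| + 1
  set γ : ℕ → ℝ := fun n ↦ α * ((m : ℝ) + 1 + n)
  set c : ℕ → ℝ := fun n ↦ (-B) ^ (m + 1 + n) / Gamma (γ n + 1)
  have hγ : ∀ n, ((3 : ℕ) : ℝ) ≤ γ n := fun n ↦ by
    simp only [γ, Nat.cast_ofNat]; nlinarith [n.cast_nonneg (α := ℝ)]
  have hsum : Summable fun n ↦ |c n| * ((γ n + 1) ^ 3 * R ^ γ n) := by
    refine ((summable_pow_mul_pow_div_Gamma hα (α * (m + 1) + 1) (|B| * R ^ α) 3).mul_left
      (|B| ^ (m + 1) * R ^ (α * (m + 1)))).congr fun n ↦ ?_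
    have hΓ : γ n + 1 = α * n + (α * (m + 1) + 1) := by ring
    have hRγ : R ^ γ n = R ^ (α * (m + 1)) * (R ^ α) ^ n := by
      rw [← rpow_mul_natCast (by positivity), ← rpow_add (by positivity)]
      congr 1
      ring
    rw [abs_div, abs_pow, abs_neg, abs_of_pos (Gamma_pos_of_pos (by linarith [hγ n])), hΓ, hRγ]
    ring
  refine ((contDiffOn_tsum_mul_rpow (by simp [R]) hγ hsum).mono fun t ht ↦ ?_).congr
    fun t _ ↦ tsum_congr fun n ↦ mul_div_right_comm _ _ _
  constructor <;> linarith [ht.1, ht.2, le_abs_self T]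

/-- Theorem 2 of the paper: the tail `z(t) = ∑_{n=m+1}^∞ (−B)^n t^{αn} / Γ(αn+1)` of the
Mittag-Leffler series is three times continuously differentiable on `[0,T]` when `mα > 3`. -/
theorem tail_contDiffOn_three (α B T : ℝ) (m : ℕ)
    (hα0 : 0 < α) (hα1 : α < 1) (hB : 0 < B) (hT : 0 < T)
    (hm : 0 < m) (hmα : 3 < m * α) :
    ContDiffOn ℝ 3
      (fun t : ℝ => ∑' n : ℕ,
        (-B) ^ (m + 1 + n) * t ^ (α * ((m : ℝ) + 1 + n)) /
          Real.Gamma (α * ((m : ℝ) + 1 + n) + 1))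
      (Set.Icc 0 T) :=
  tail_contDiffOn_three_general α B T m hmα
end

section
/- For every real x > 0, the Gamma function satisfies Γ(1 + x)^{2/x} ≥ e^{−2}(x + 1)(x + 2). -/
/-!
Put `φ x = x/2 * (log (x+1) + log (x+2)) - x` and `f x = log Γ(1+x) - φ x`, so the claim is
`f ≥ 0`. By `Γ(y+1) = y Γ(y)`, `f (y+1) - f y = E y := log (1+y) - (φ (y+1) - φ y)`. If `E` is
antitone beyond `a ≤ b`, telescoping gives `f b - f a ≥ f (b+N) - f (a+N)`, and log-convexity of
`Γ` bounds the right side below by `(b-a) log (a+N) - (φ (b+N) - φ (a+N))`, which tends to `0`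
because `φ' y - log y → 0`. As `E` is antitone on `[1/2, ∞)`, `f` is monotone there. On `[0, 1/2]`
the Euler-product bound `log Γ(1+x) ≥ x log 8 - ∑_{m ≤ 8} log (1 + x/m)` (again log-convexity)
and Taylor bounds for the logarithms reduce `f ≥ 0` to a polynomial inequality.
-/

open Real Finset Set Filter Topology

theorem log_one_add_le_sum_range {s : ℝ} (hs : 0 ≤ s) {n : ℕ} (hn : Odd n) :
    log (1 + s) ≤ ∑ i ∈ range n, (-1) ^ i * s ^ (i + 1) / (i + 1) := by
  let g (t : ℝ) : ℝ := ∑ i ∈ range n, (-1) ^ i * t ^ (i + 1) / (i + 1) - log (1 + t)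
  have hg : ∀ t, 0 ≤ t → HasDerivAt g (t ^ n / (1 + t)) t := by
    intro t ht
    have h1t : 1 + t ≠ 0 := by positivity
    refine (HasDerivAt.fun_sum (fun i _ => ((hasDerivAt_pow (i + 1) t).const_mul _).div_const _)
      |>.sub (((hasDerivAt_id t).const_add 1).log h1t)).congr_deriv ?_
    have hterm : ∀ i ∈ range n,
        (-1 : ℝ) ^ i * (↑(i + 1) * t ^ (i + 1 - 1)) / (i + 1) = (-t) ^ i := by
      intro i _
      rw [Nat.add_sub_cancel, neg_pow t i]
      push_cast
      field_simp
    have hgeom := geom_sum_mul (-t) n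
    rw [hn.neg_pow] at hgeom
    rw [sum_congr rfl hterm, id]
    field_simp
    linear_combination -hgeom
  have hmono : MonotoneOn g (Ici 0) :=
    monotoneOn_of_hasDerivWithinAt_nonneg (convex_Ici 0)
      (fun t ht => (hg t ht).continuousAt.continuousWithinAt)
      (fun t ht => (hg t (interior_subset ht)).hasDerivWithinAt)
      (fun t ht => by rw [interior_Ici] at ht; have : 0 < t := ht; positivity)
  have := hmono self_mem_Ici hs hs
  simpa [g] using this

theorem log_Gamma_add_one {y : ℝ} (hy : 0 < y) :
    log (Gamma (y + 1)) = log (Gamma y) + log y := by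
  rw [Gamma_add_one hy.ne', log_mul hy.ne' (Gamma_pos_of_pos hy).ne', add_comm]

theorem mul_log_le_log_Gamma_one_add_sub {a h : ℝ} (ha : 0 < a) (hh : 0 ≤ h) :
    h * log a ≤ log (Gamma (1 + (a + h))) - log (Gamma (1 + a)) := by
  rcases hh.eq_or_lt with rfl | hh
  · simp
  have hslope := convexOn_log_Gamma.slope_mono_adjacent (mem_Ioi.2 ha)
    (mem_Ioi.2 (by linarith : 0 < a + 1 + h)) (lt_add_one a) (lt_add_of_pos_right _ hh)
  simp only [Function.comp_apply, add_sub_cancel_left, div_one, log_Gamma_add_one ha] at hslope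
  rw [le_div_iff₀ hh] at hslope
  rw [show 1 + (a + h) = a + 1 + h by ring, add_comm 1 a, log_Gamma_add_one ha]
  linarith

theorem mul_log_sub_sum_log_le_log_Gamma_one_add {x : ℝ} (hx : 0 ≤ x) {n : ℕ} (hn : n ≠ 0) :
    x * log n - ∑ m ∈ range n, log (1 + x / (m + 1)) ≤ log (Gamma (1 + x)) := by
  have hsec := mul_log_le_log_Gamma_one_add_sub (Nat.cast_pos.2 (Nat.pos_of_ne_zero hn)) hx
  have hfeq : ∀ {y : ℝ}, 0 < y → (log ∘ Gamma) (y + 1) = (log ∘ Gamma) y + log y :=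
    fun hy => log_Gamma_add_one hy
  have hx' := BohrMollerup.f_add_nat_eq hfeq (by linarith : 0 < 1 + x) n
  have h1 := BohrMollerup.f_add_nat_eq hfeq one_pos n
  simp only [Function.comp_apply, Gamma_one, log_one, zero_add] at hx' h1
  have hsum : ∑ m ∈ range n, log (1 + x / (m + 1)) =
      ∑ m ∈ range n, log (1 + x + m) - ∑ m ∈ range n, log (1 + m) := by
    rw [← sum_sub_distrib]
    refine sum_congr rfl fun m _ => ?_
    rw [← log_div (by positivity) (by positivity)]
    congr 1
    field_simp
    ring
  rw [show 1 + ((n : ℝ) + x) = 1 + x + n by ring, hx', h1] at hsec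
  rw [hsum]
  linarith

theorem monotoneOn_log_Gamma_one_add_sub {φ : ℝ → ℝ} {c : ℝ} (hc : 0 < c)
    (hstep : AntitoneOn (fun y => log (1 + y) - (φ (y + 1) - φ y)) (Ici c))
    (hφ : ∀ h, 0 ≤ h → Tendsto (fun y => φ (y + h) - φ y - h * log y) atTop (𝓝 0)) :
    MonotoneOn (fun x => log (Gamma (1 + x)) - φ x) (Ici c) := by
  intro a ha b hb hab
  set f := fun x => log (Gamma (1 + x)) - φ x
  have ha0 : 0 < a := hc.trans_le ha
  have hb0 : 0 < b := ha0.trans_le hab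
  have hincr : ∀ y, 0 < y → f (y + 1) - f y = log (1 + y) - (φ (y + 1) - φ y) := by
    intro y hy
    simp only [f]
    rw [show 1 + (y + 1) = 1 + y + 1 by ring, log_Gamma_add_one (by linarith)]
    ring
  have htel : ∀ N : ℕ, f (b + N) - f (a + N) ≤ f b - f a := by
    intro N
    induction N with
    | zero => simp
    | succ N ih =>
      have hN : (0 : ℝ) ≤ N := N.cast_nonneg
      have hE := hstep (mem_Ici.2 (by linarith [mem_Ici.1 ha] : c ≤ a + N))
        (mem_Ici.2 (by linarith [mem_Ici.1 hb] : c ≤ b + N)) (by linarith)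
      have := hincr (a + N) (by positivity)
      have := hincr (b + N) (by positivity)
      push_cast
      rw [← add_assoc, ← add_assoc]
      linarith
  have hsec : ∀ N : ℕ, -(φ (a + N + (b - a)) - φ (a + N) - (b - a) * log (a + N)) ≤
      f (b + N) - f (a + N) := by
    intro N
    have := mul_log_le_log_Gamma_one_add_sub (by positivity : 0 < a + N) (sub_nonneg.2 hab)
    simp only [f, show a + N + (b - a) = b + N by ring] at this ⊢
    linarith
  have hlim : Tendsto (fun N : ℕ => -(φ (a + N + (b - a)) - φ (a + N) - (b - a) * log (a + N)))
      atTop (𝓝 0) := by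
    simpa using ((hφ (b - a) (sub_nonneg.2 hab)).comp
      (tendsto_atTop_add_const_left _ a tendsto_natCast_atTop_atTop)).neg
  have := le_of_tendsto' hlim fun N => (hsec N).trans (htel N)
  simpa [f] using this

theorem tendsto_log_one_add_div_atTop (c : ℝ) :
    Tendsto (fun y => log (1 + c / y)) atTop (𝓝 0) := by
  have h1 : Tendsto (fun y => 1 + c / y) atTop (𝓝 1) := by
    simpa using tendsto_const_nhds.add (tendsto_const_nhds.div_atTop (tendsto_id (α := ℝ)))
  simpa using h1.log one_ne_zero

theorem tendsto_add_mul_log_add_sub_mul_log_add (h k : ℝ) :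
    Tendsto (fun y => (y + h) * log (y + h + k) - y * log (y + k) - h * log y) atTop (𝓝 h) := by
  have hk := tendsto_atTop_add_const_right _ k tendsto_id
  have hA := (tendsto_mul_log_one_add_div_atTop h).comp hk
  have hB := (tendsto_log_one_add_div_atTop h).comp hk
  have hC := tendsto_log_one_add_div_atTop (h + k)
  have hlim := (hA.sub (hB.const_mul k)).add (hC.const_mul h)
  simp only [mul_zero, sub_zero, add_zero] at hlim
  refine hlim.congr' ?_
  filter_upwards [eventually_gt_atTop (|h| + |k|)] with y hy
  have hy0 : 0 < y := lt_of_le_of_lt (by positivity) hy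
  have hyk : 0 < y + k := by linarith [neg_abs_le k, abs_nonneg h]
  have hyhk : 0 < y + h + k := by linarith [neg_abs_le k, neg_abs_le h]
  have e1 : log (1 + h / (y + k)) = log (y + h + k) - log (y + k) := by
    rw [← log_div hyhk.ne' hyk.ne']; congr 1; field_simp; ring
  have e2 : log (1 + (h + k) / y) = log (y + h + k) - log y := by
    rw [← log_div hyhk.ne' hy0.ne']; congr 1; field_simp; ring
  simp only [Function.comp_apply, id, e1, e2]
  ring

noncomputable def logGammaMinorant (x : ℝ) : ℝ := x / 2 * (log (x + 1) + log (x + 2)) - x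

theorem tendsto_logGammaMinorant_add_sub (h : ℝ) :
    Tendsto (fun y => logGammaMinorant (y + h) - logGammaMinorant y - h * log y) atTop (𝓝 0) := by
  have := ((tendsto_add_mul_log_add_sub_mul_log_add h 1).add
    (tendsto_add_mul_log_add_sub_mul_log_add h 2)).div_const 2 |>.sub_const h
  rw [add_self_div_two, sub_self] at this
  refine this.congr fun y => ?_
  simp only [logGammaMinorant]
  ring

theorem div_sub_div_sub_div_le_log_div {y : ℝ} (hy : 1 / 2 ≤ y) :
    (y + 2) / (2 * (y + 1)) - 1 / (2 * (y + 2)) - (y + 1) / (2 * (y + 3)) ≤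
      log ((y + 3) / (y + 1)) / 2 := by
  have hy1 : 0 < y + 1 := by linarith
  have hy2 : 0 < y + 2 := by linarith
  set t := 1 / (y + 2) with ht
  have hq : (1 + t) / (1 - t) = (y + 3) / (y + 1) := by
    rw [ht, one_add_div hy2.ne', one_sub_div hy2.ne', div_div_div_cancel_right₀ hy2.ne']
    ring_nf
  have hlog := sum_range_le_log_div (x := t) (by positivity)
    (by rw [ht, div_lt_one hy2]; linarith) 2
  rw [hq] at hlog
  simp only [sum_range_succ, sum_range_zero] at hlog
  norm_num at hlog
  have hrat : (y + 2) / (2 * (y + 1)) - 1 / (2 * (y + 2)) - (y + 1) / (2 * (y + 3)) ≤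
      t + t ^ 3 / 3 := by
    rw [ht]
    field_simp
    nlinarith [mul_pos hy1 hy2, sq_nonneg y]
  linarith

theorem antitoneOn_log_one_add_sub_logGammaMinorant_add_one_sub :
    AntitoneOn (fun y => log (1 + y) - (logGammaMinorant (y + 1) - logGammaMinorant y))
      (Ici (1 / 2)) := by
  let G (y : ℝ) : ℝ :=
    1 + (1 + y / 2) * log (y + 1) - log (y + 2) / 2 - (y + 1) / 2 * log (y + 3)
  let G' (y : ℝ) : ℝ := (y + 2) / (2 * (y + 1)) - 1 / (2 * (y + 2)) - (y + 1) / (2 * (y + 3))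
    - (log (y + 3) - log (y + 1)) / 2
  have hG : ∀ y, 0 < y → HasDerivAt G (G' y) y := by
    intro y hy
    have h1 := ((hasDerivAt_id y).add_const 1).log (by positivity)
    have h2 := ((hasDerivAt_id y).add_const 2).log (by positivity)
    have h3 := ((hasDerivAt_id y).add_const 3).log (by positivity)
    refine ((((((hasDerivAt_id y).div_const 2).const_add 1).mul h1).const_add 1 |>.sub
      (h2.div_const 2)).sub ((((hasDerivAt_id y).add_const 1).div_const 2).mul h3)).congr_deriv ?_
    simp only [G', id]
    field_simp
    ring
  have hG'_nonpos : ∀ y, 1 / 2 < y → G' y ≤ 0 := by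
    intro y hy
    have := div_sub_div_sub_div_le_log_div hy.le
    rw [log_div (by linarith) (by linarith)] at this
    simp only [G']
    linarith
  have hanti : AntitoneOn G (Ici (1 / 2)) :=
    antitoneOn_of_hasDerivWithinAt_nonpos (convex_Ici _)
      (fun y hy => (hG y (by linarith [mem_Ici.1 hy])).continuousAt.continuousWithinAt)
      (fun y hy => (hG y (by rw [interior_Ici, Set.mem_Ioi] at hy; linarith)).hasDerivWithinAt)
      (fun y hy => hG'_nonpos y (by rwa [interior_Ici, Set.mem_Ioi] at hy))
  refine hanti.congr fun y _ => ?_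
  simp only [G, logGammaMinorant]
  rw [show y + 1 + 1 = y + 2 by ring, show y + 1 + 2 = y + 3 by ring, add_comm 1 y]
  ring

theorem logGammaMinorant_le_log_Gamma_one_add_of_le_half {x : ℝ} (hx : 0 ≤ x)
    (hx2 : x ≤ 1 / 2) : logGammaMinorant x ≤ log (Gamma (1 + x)) := by
  -- `8` is the least `n` for which this bound exceeds `logGammaMinorant` on `[0, 1/2]`; as a power
  -- of `2`, its logarithm is controlled by `log_two_gt_d9`.
  have hΓ := mul_log_sub_sum_log_le_log_Gamma_one_add hx (n := 8) (by norm_num)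
  have hodd : Odd 5 := by decide
  have hsum : ∑ m ∈ range 8, log (1 + x / (m + 1)) ≤
      ∑ m ∈ range 8, ∑ i ∈ range 5, (-1) ^ i * (x / (m + 1)) ^ (i + 1) / (i + 1) :=
    sum_le_sum fun m _ => log_one_add_le_sum_range (by positivity) hodd
  have h1 := mul_le_mul_of_nonneg_left (log_one_add_le_sum_range hx hodd)
    (by positivity : 0 ≤ x / 2)
  have h2 := mul_le_mul_of_nonneg_left
    (log_one_add_le_sum_range (by positivity : 0 ≤ x / 2) hodd) (by positivity : 0 ≤ x / 2)
  have hpoly : x / 2 * (∑ i ∈ range 5, (-1) ^ i * x ^ (i + 1) / (i + 1)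
        + ∑ i ∈ range 5, (-1) ^ i * (x / 2) ^ (i + 1) / (i + 1))
      + ∑ m ∈ range 8, ∑ i ∈ range 5, (-1) ^ i * (x / (m + 1)) ^ (i + 1) / (i + 1)
      ≤ x * (5 / 2 * 0.6931471803 + 1) := by
    have hx' := sub_nonneg.2 hx2
    simp only [sum_range_succ, sum_range_zero]
    norm_num
    nlinarith [mul_nonneg hx hx', pow_nonneg hx 2, pow_nonneg hx 3, pow_nonneg hx 4,
      pow_nonneg hx 5, mul_nonneg (pow_nonneg hx 2) hx', mul_nonneg (pow_nonneg hx 3) hx',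
      mul_nonneg (pow_nonneg hx 4) hx', mul_nonneg (pow_nonneg hx 5) hx']
  have hlog8 : log ((8 : ℕ) : ℝ) = 3 * log 2 := by
    rw [show ((8 : ℕ) : ℝ) = 2 ^ 3 by norm_num, log_pow]; norm_num
  have hlog2 := mul_le_mul_of_nonneg_left log_two_gt_d9.le hx
  have hx2' : log (x + 2) = log 2 + log (1 + x / 2) := by
    rw [← log_mul two_ne_zero (by positivity)]; ring_nf
  rw [hlog8] at hΓ
  rw [logGammaMinorant, hx2', add_comm x 1]
  linarith

theorem logGammaMinorant_le_log_Gamma_one_add {x : ℝ} (hx : 0 ≤ x) :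
    logGammaMinorant x ≤ log (Gamma (1 + x)) := by
  rcases le_total x (1 / 2) with hle | hge
  · exact logGammaMinorant_le_log_Gamma_one_add_of_le_half hx hle
  have hmono := monotoneOn_log_Gamma_one_add_sub (by norm_num)
    antitoneOn_log_one_add_sub_logGammaMinorant_add_one_sub
    fun h _ => tendsto_logGammaMinorant_add_sub h
  have hhalf :=
    logGammaMinorant_le_log_Gamma_one_add_of_le_half (x := 1 / 2) (by norm_num) le_rfl
  have := hmono self_mem_Ici hge hge
  dsimp only at this
  linarith

theorem exp_neg_two_mul_le_rpow_of_logGammaMinorant_le {x G : ℝ} (hx : 0 < x) (hG : 0 < G)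
    (h : logGammaMinorant x ≤ log G) : exp (-2) * ((x + 1) * (x + 2)) ≤ G ^ (2 / x) := by
  have hmul : 2 / x * logGammaMinorant x = -2 + log ((x + 1) * (x + 2)) := by
    rw [logGammaMinorant, log_mul (by positivity) (by positivity)]
    field_simp
    ring
  rw [rpow_def_of_pos hG, mul_comm (log G)]
  calc exp (-2) * ((x + 1) * (x + 2)) = exp (2 / x * logGammaMinorant x) := by
        rw [hmul, exp_add, exp_log (by positivity)]
    _ ≤ exp (2 / x * log G) := by gcongr

/-- For every `x > 0`, `Γ(1 + x)^{2/x} ≥ e^{−2} (x+1)(x+2)`. -/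
theorem gamma_rpow_ge (x : ℝ) (hx : 0 < x) :
    Real.exp (-2) * ((x + 1) * (x + 2)) ≤ Real.Gamma (1 + x) ^ (2 / x) :=
  exp_neg_two_mul_le_rpow_of_logGammaMinorant_le hx (Gamma_pos_of_pos (by linarith))
    (logGammaMinorant_le_log_Gamma_one_add hx.le)
end

section
/- Let 0 < α < 1, B > 0, T > 0, and let M < M̃ be positive integers such that αM + α − 2 > 0 and ( B^{1/α} T e / (αM + α − 2) )^α < 1/2. Then for every t ∈ [0,T], | ∑_{n=M+1}^{M̃} (−B)^n t^{αn−2} / Γ(αn − 1) | < 2 B^{2/α} ( B^{1/α} T e / (αM + α − 2) )^{αM + α − 2}. -/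
open Finset

/-! The elementary Stirling-type bound `Γ(y+1) ≥ y^y e^{-y}` gives
`t^y / Γ(y+1) ≤ (t e / y)^y`. Writing `B^n = B^{2/α} (B^{1/α})^{αn-2}`, the `n`-th term is
therefore at most `B^{2/α} R^{αn-2}` with `R = B^{1/α} T e / (αM+α-2)`, i.e.
`B^{2/α} R^{αM+α-2} q^{n-M-1}` with `q = R^α < 1/2`; the geometric series in `q` sums to less
than `2`. -/

namespace Real

open MeasureTheory Set

/-- Cutting the Gamma integral `∫₀^∞ e^{-t} t^x dt` down to `t > x`, where `t^x ≥ x^x`. -/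
theorem rpow_self_mul_exp_neg_le_Gamma_add_one {x : ℝ} (hx : 0 ≤ x) :
    x ^ x * exp (-x) ≤ Gamma (x + 1) := by
  rw [Gamma_eq_integral (by linarith), add_sub_cancel_right]
  have hint : IntegrableOn (fun t : ℝ => exp (-t) * t ^ x) (Ioi 0) := by
    simpa using GammaIntegral_convergent (s := x + 1) (by linarith)
  calc x ^ x * exp (-x) = ∫ t in Ioi x, exp (-t) * x ^ x := by
        rw [integral_mul_const, integral_exp_neg_Ioi, mul_comm]
    _ ≤ ∫ t in Ioi x, exp (-t) * t ^ x := by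
        have hconst : IntegrableOn (fun t : ℝ => exp (-t) * x ^ x) (Ioi x) := by
          simpa [IntegrableOn] using (exp_neg_integrableOn_Ioi x one_pos).mul_const (x ^ x)
        refine setIntegral_mono_on hconst (hint.mono_set (Ioi_subset_Ioi hx)) measurableSet_Ioi
          fun t ht => ?_
        exact mul_le_mul_of_nonneg_left (rpow_le_rpow hx (le_of_lt ht) hx) (exp_pos _).le
    _ ≤ ∫ t in Ioi 0, exp (-t) * t ^ x := by
        refine setIntegral_mono_set hint ?_ (Ioi_subset_Ioi hx).eventuallyLE
        filter_upwards [self_mem_ae_restrict measurableSet_Ioi] with t ht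
        exact mul_nonneg (exp_pos _).le (rpow_nonneg (le_of_lt ht) _)

theorem rpow_div_Gamma_add_one_le {t y : ℝ} (ht : 0 ≤ t) (hy : 0 < y) :
    t ^ y / Gamma (y + 1) ≤ (t * exp 1 / y) ^ y := by
  have hyy : 0 < y ^ y := rpow_pos_of_pos hy y
  calc t ^ y / Gamma (y + 1) ≤ t ^ y / (y ^ y * exp (-y)) :=
        div_le_div_of_nonneg_left (by positivity) (by positivity)
          (rpow_self_mul_exp_neg_le_Gamma_add_one hy.le)
    _ = (t * exp 1 / y) ^ y := by
        rw [div_rpow (by positivity) hy.le, mul_rpow ht (exp_pos 1).le, exp_one_rpow, exp_neg]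
        field_simp

end Real

theorem abs_neg_pow_mul_rpow_div_Gamma_le {α B T t x : ℝ} {n : ℕ} (hα : 0 < α) (hB : 0 < B)
    (ht : 0 ≤ t) (htT : t ≤ T) (hx : 0 < x) (hxn : x ≤ α * n - 2) :
    |(-B) ^ n * t ^ (α * n - 2) / Real.Gamma (α * n - 1)| ≤
      B ^ (2 / α) * (B ^ (1 / α) * T * Real.exp 1 / x) ^ (α * n - 2) := by
  set y := α * n - 2
  have hy : 0 < y := hx.trans_le hxn
  have hGamma : Real.Gamma (α * n - 1) = Real.Gamma (y + 1) := by congr 1; ring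
  have hBn : B ^ n = B ^ (2 / α) * (B ^ (1 / α)) ^ y := by
    rw [← Real.rpow_natCast, ← Real.rpow_mul hB.le, ← Real.rpow_add hB]
    congr 1
    field_simp
    ring
  have hbase : B ^ (1 / α) * t * Real.exp 1 / y ≤ B ^ (1 / α) * T * Real.exp 1 / x := by
    have hT : 0 ≤ T := ht.trans htT
    exact div_le_div₀ (by positivity) (by gcongr) hx hxn
  calc |(-B) ^ n * t ^ y / Real.Gamma (α * n - 1)|
      = B ^ (2 / α) * ((B ^ (1 / α) * t) ^ y / Real.Gamma (y + 1)) := by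
        rw [abs_div, abs_mul, abs_pow, abs_neg, abs_of_pos hB, abs_of_nonneg (by positivity),
          hGamma, abs_of_pos (Real.Gamma_pos_of_pos (by linarith)), hBn,
          Real.mul_rpow (by positivity) ht]
        ring
    _ ≤ B ^ (2 / α) * (B ^ (1 / α) * t * Real.exp 1 / y) ^ y := by
        gcongr
        exact Real.rpow_div_Gamma_add_one_le (by positivity) hy
    _ ≤ B ^ (2 / α) * (B ^ (1 / α) * T * Real.exp 1 / x) ^ y := by
        gcongr

theorem sum_Icc_pow_sub_lt_two {q : ℝ} (hq0 : 0 ≤ q) (hq : q < 1 / 2) (m m' : ℕ) :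
    ∑ n ∈ Icc m m', q ^ (n - m) < 2 := by
  rw [← Ico_add_one_right_eq_Icc, sum_Ico_eq_sum_range]
  simp only [Nat.add_sub_cancel_left, range_eq_Ico]
  calc ∑ k ∈ Ico 0 (m' + 1 - m), q ^ k ≤ q ^ 0 / (1 - q) :=
        geom_sum_Ico_le_of_lt_one hq0 (by linarith)
    _ < 2 := by rw [pow_zero, div_lt_iff₀ (by linarith)]; linarith

theorem uniform_cauchy_estimate_general (α B T : ℝ) (M M' : ℕ)
    (hα0 : 0 < α) (hB : 0 < B) (hT : 0 < T)
    (hpos : 0 < α * M + α - 2)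
    (hhalf : (B ^ (1 / α) * T * Real.exp 1 / (α * M + α - 2)) ^ α < 1 / 2) :
    ∀ t ∈ Set.Icc (0 : ℝ) T,
      |∑ n ∈ Finset.Icc (M + 1) M',
          (-B) ^ n * t ^ (α * n - 2) / Real.Gamma (α * n - 1)| <
        2 * B ^ (2 / α) *
          (B ^ (1 / α) * T * Real.exp 1 / (α * M + α - 2)) ^ (α * M + α - 2) := by
  rintro t ⟨ht0, htT⟩
  set x := α * M + α - 2
  set R := B ^ (1 / α) * T * Real.exp 1 / x
  have hR : 0 < R := by positivity
  have hterm : ∀ n ∈ Icc (M + 1) M', |(-B) ^ n * t ^ (α * n - 2) / Real.Gamma (α * n - 1)| ≤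
      B ^ (2 / α) * R ^ x * (R ^ α) ^ (n - (M + 1)) := by
    intro n hn
    have hMn : M + 1 ≤ n := (mem_Icc.1 hn).1
    have hexp : α * n - 2 = x + α * (n - (M + 1) : ℕ) := by
      rw [Nat.cast_sub hMn]; push_cast; ring
    calc _ ≤ B ^ (2 / α) * R ^ (α * n - 2) :=
          abs_neg_pow_mul_rpow_div_Gamma_le hα0 hB ht0 htT hpos (by
            rw [hexp]; exact le_add_of_nonneg_right (by positivity))
      _ = _ := by rw [hexp, Real.rpow_add hR, Real.rpow_mul_natCast hR.le, mul_assoc]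
  calc _ ≤ ∑ n ∈ Icc (M + 1) M', |(-B) ^ n * t ^ (α * n - 2) / Real.Gamma (α * n - 1)| :=
        abs_sum_le_sum_abs _ _
    _ ≤ B ^ (2 / α) * R ^ x * ∑ n ∈ Icc (M + 1) M', (R ^ α) ^ (n - (M + 1)) := by
        rw [mul_sum]; exact sum_le_sum hterm
    _ < B ^ (2 / α) * R ^ x * 2 :=
        mul_lt_mul_of_pos_left (sum_Icc_pow_sub_lt_two (Real.rpow_pos_of_pos hR α).le hhalf _ _)
          (mul_pos (by positivity) (Real.rpow_pos_of_pos hR x))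
    _ = _ := by ring

/-- The uniform Cauchy estimate from the proof of Theorem 2: for positive integers `M < M̃`
with `αM + α − 2 > 0` and `(B^{1/α} T e/(αM+α−2))^α < 1/2`, and every `t ∈ [0,T]`,
`|∑_{n=M+1}^{M̃} (−B)^n t^{αn−2}/Γ(αn−1)| < 2 B^{2/α} (B^{1/α} T e/(αM+α−2))^{αM+α−2}`. -/
theorem uniform_cauchy_estimate (α B T : ℝ) (M M' : ℕ)
    (hα0 : 0 < α) (hα1 : α < 1) (hB : 0 < B) (hT : 0 < T)
    (hM : 0 < M) (hMM : M < M')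
    (hpos : 0 < α * M + α - 2)
    (hhalf : (B ^ (1 / α) * T * Real.exp 1 / (α * M + α - 2)) ^ α < 1 / 2) :
    ∀ t ∈ Set.Icc (0 : ℝ) T,
      |∑ n ∈ Finset.Icc (M + 1) M',
          (-B) ^ n * t ^ (α * n - 2) / Real.Gamma (α * n - 1)| <
        2 * B ^ (2 / α) *
          (B ^ (1 / α) * T * Real.exp 1 / (α * M + α - 2)) ^ (α * M + α - 2) :=
  uniform_cauchy_estimate_general α B T M M' hα0 hB hT hpos hhalf
end

section
/- Let 0 < α < 1, B > 0, T > 0 and let m be a positive integer with mα > 2. Then the function z(t) = ∑_{n=m+1}^∞ (−B)^n t^{αn} / Γ(αn + 1) is twice differentiable at every t ∈ (0,T], and its second derivative is given by the termwise differentiated series z''(t) = ∑_{n=m+1}^∞ (−B)^n t^{αn−2} / Γ(αn − 1). -/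
/-!
Since `Γ(c + 1) = c Γ(c)`, the term `x ^ c / Γ(c + 1)` differentiates to `x ^ (c - 1) / Γ(c)`,
so differentiating the series termwise only lowers every exponent by one; `mα > 2` keeps the
exponents of the first two derivatives nonnegative, hence on `(0, S)` each series is dominated by
its absolute series at `S`. Up to a factor `S ^ (-j)` that is `∑ (|B| S^α)^k / Γ(αk + 1 - j)`,
which converges because `Γ` beats every exponential: `R ^ (x - 2) ≤ e^R Γ(x)` for `x ≥ 2`,
comparing `Γ` with the factorial and the factorial with the exponential series.
-/

open Real Set Filter Topology

theorem rpow_sub_two_le_exp_mul_Gamma {R x : ℝ} (hR : 1 ≤ R) (hx : 2 ≤ x) :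
    R ^ (x - 2) ≤ exp R * Gamma x := by
  set n := ⌊x⌋₊
  have hn : 2 ≤ n := Nat.le_floor (by exact_mod_cast hx)
  have hnx : (n : ℝ) ≤ x := Nat.floor_le (by linarith)
  have hn1 : ((n - 1 : ℕ) : ℝ) + 1 = n := by rw [Nat.cast_sub (by omega)]; ring
  have hxn : x - 2 ≤ ((n - 1 : ℕ) : ℝ) := by linarith [Nat.lt_floor_add_one x]
  calc R ^ (x - 2) ≤ R ^ (n - 1) := by
        rw [← rpow_natCast]; exact rpow_le_rpow_of_exponent_le hR hxn
    _ ≤ exp R * (n - 1).factorial :=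
        (div_le_iff₀ (by positivity)).1 (pow_div_factorial_le_exp R (by linarith) _)
    _ = exp R * Gamma n := by rw [← Gamma_nat_eq_factorial, hn1]
    _ ≤ exp R * Gamma x := by
        gcongr
        exact Gamma_strictMonoOn_Ici.monotoneOn (by simpa using hn) (by simpa using hx) hnx

theorem summable_pow_div_Gamma (C d : ℝ) {α : ℝ} (hα : 0 < α) :
    Summable fun k : ℕ => C ^ k / Gamma (α * k + d) := by
  set R := (‖C‖ + 1) ^ α⁻¹
  have hRα : R ^ α = ‖C‖ + 1 := by
    rw [← rpow_mul (by positivity), inv_mul_cancel₀ hα.ne', rpow_one]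
  have hR : 1 ≤ R := one_le_rpow (by linarith [norm_nonneg C]) (inv_nonneg.2 hα.le)
  have hr : ‖C‖ / (‖C‖ + 1) < 1 := (div_lt_one (by positivity)).2 (lt_add_one _)
  have hlarge : ∀ᶠ k : ℕ in atTop, 2 ≤ α * k + d := by
    obtain ⟨N, hN⟩ := exists_nat_ge ((2 - d) / α)
    filter_upwards [eventually_ge_atTop N] with k hk
    have := hN.trans (Nat.cast_le.2 hk)
    rw [div_le_iff₀ hα] at this
    linarith
  refine .of_norm_bounded_eventually_nat
    ((summable_geometric_of_lt_one (by positivity) hr).mul_left (exp R / R ^ (d - 2))) ?_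
  filter_upwards [hlarge] with k hk
  have hΓ : 0 < Gamma (α * k + d) := Gamma_pos_of_pos (by linarith)
  have hRk : R ^ (α * k + d - 2) = (‖C‖ + 1) ^ k * R ^ (d - 2) := by
    rw [add_sub_assoc, rpow_add (by linarith), rpow_mul_natCast (by linarith), hRα]
  calc ‖C ^ k / Gamma (α * k + d)‖ = ‖C‖ ^ k / Gamma (α * k + d) := by
        rw [norm_div, norm_pow, norm_of_nonneg hΓ.le]
    _ ≤ ‖C‖ ^ k / ((‖C‖ + 1) ^ k * R ^ (d - 2) / exp R) := by
        gcongr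
        rw [div_le_iff₀ (exp_pos R), ← hRk]
        linarith [rpow_sub_two_le_exp_mul_Gamma hR hk]
    _ = exp R / R ^ (d - 2) * (‖C‖ / (‖C‖ + 1)) ^ k := by
        have : 0 < R ^ (d - 2) := rpow_pos_of_pos (by linarith) _
        rw [div_pow]
        field_simp

theorem hasDerivAt_rpow_div_Gamma {c x : ℝ} (hc : c ≠ 0) (hx : x ≠ 0 ∨ 1 ≤ c) :
    HasDerivAt (fun y => y ^ c / Gamma (c + 1)) (x ^ (c - 1) / Gamma c) x := by
  refine ((hasDerivAt_rpow_const hx).div_const (Gamma (c + 1))).congr_deriv ?_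
  rw [Gamma_add_one hc, mul_div_mul_left _ _ hc]

/-- The `j`-th derivative of `x ↦ a n * x ^ e n / Γ(e n + 1)`. -/
noncomputable def fracTerm (a e : ℕ → ℝ) (j : ℝ) (n : ℕ) (x : ℝ) : ℝ :=
  a n * x ^ (e n - j) / Gamma (e n - j + 1)

section fracTerm

variable {a e : ℕ → ℝ} {j x S : ℝ} {n : ℕ}

theorem hasDerivAt_fracTerm (hn : j < e n) (hx : x ≠ 0) :
    HasDerivAt (fracTerm a e j n) (fracTerm a e (j + 1) n x) x := by
  have h := (hasDerivAt_rpow_div_Gamma (sub_ne_zero.2 hn.ne') (.inl hx)).const_mul (a n)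
  simp only [← mul_div_assoc] at h
  refine h.congr_deriv ?_
  rw [fracTerm, show e n - (j + 1) = e n - j - 1 by ring, sub_add_cancel, mul_div_assoc]

theorem norm_fracTerm_le (hn : j ≤ e n) (hx : x ∈ Ioc 0 S) :
    ‖fracTerm a e j n x‖ ≤ ‖fracTerm a e j n S‖ := by
  obtain ⟨hx0, hxS⟩ := hx
  simp only [fracTerm, norm_div, norm_mul]
  rw [norm_of_nonneg (rpow_nonneg hx0.le _), norm_of_nonneg (rpow_nonneg (hx0.le.trans hxS) _)]
  gcongr

theorem hasDerivAt_tsum_fracTerm (he : ∀ n, j + 1 ≤ e n)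
    (hj : Summable fun n => ‖fracTerm a e j n S‖)
    (hj₁ : Summable fun n => ‖fracTerm a e (j + 1) n S‖) (hx : x ∈ Ioo 0 S) :
    HasDerivAt (fun y => ∑' n, fracTerm a e j n y) (∑' n, fracTerm a e (j + 1) n x) x :=
  hasDerivAt_tsum_of_isPreconnected hj₁ isOpen_Ioo isPreconnected_Ioo
    (fun n y hy => hasDerivAt_fracTerm (by linarith [he n]) hy.1.ne')
    (fun n y hy => norm_fracTerm_le (he n) (Ioo_subset_Ioc_self hy)) hx
    (.of_norm_bounded hj fun n => norm_fracTerm_le (by linarith [he n]) (Ioo_subset_Ioc_self hx))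
    hx

end fracTerm

theorem summable_norm_fracTerm_tail (c j : ℝ) {α S : ℝ} (hα : 0 < α) (hS : 0 < S) (m : ℕ) :
    Summable fun n =>
      ‖fracTerm (fun n => c ^ (m + 1 + n)) (fun n => α * ((m : ℝ) + 1 + n)) j n S‖ := by
  have h := (summable_nat_add_iff (m + 1)).2 (summable_pow_div_Gamma (‖c‖ * S ^ α) (1 - j) hα)
  refine (h.norm.mul_left (S ^ (-j))).congr fun n => ?_
  simp only [fracTerm, norm_div, norm_mul, norm_pow, norm_norm,
    norm_of_nonneg (rpow_nonneg hS.le _)]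
  have hpow : S ^ (α * ((m : ℝ) + 1 + n) - j) = S ^ (-j) * (S ^ α) ^ (m + 1 + n) := by
    rw [← rpow_mul_natCast hS.le, ← rpow_add hS]; push_cast; ring_nf
  have hΓ : α * ((m + 1 + n : ℕ) : ℝ) + (1 - j) = α * ((m : ℝ) + 1 + n) - j + 1 := by
    push_cast; ring
  rw [add_comm n, hΓ, hpow, mul_pow]
  ring

theorem tail_second_deriv_termwise_general (α B T : ℝ) (m : ℕ)
    (hα0 : 0 < α) (hmα : 2 < m * α)
    (z : ℝ → ℝ)
    (hz : ∀ t : ℝ, z t = ∑' n : ℕ,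
      (-B) ^ (m + 1 + n) * t ^ (α * ((m : ℝ) + 1 + n)) /
        Real.Gamma (α * ((m : ℝ) + 1 + n) + 1)) :
    ∀ t ∈ Set.Ioc (0 : ℝ) T,
      DifferentiableAt ℝ z t ∧ DifferentiableAt ℝ (deriv z) t ∧
        deriv (deriv z) t = ∑' n : ℕ,
          (-B) ^ (m + 1 + n) * t ^ (α * ((m : ℝ) + 1 + n) - 2) /
            Real.Gamma (α * ((m : ℝ) + 1 + n) - 1) := by
  rintro t ⟨ht, -⟩
  set a : ℕ → ℝ := fun n => (-B) ^ (m + 1 + n)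
  set e : ℕ → ℝ := fun n => α * ((m : ℝ) + 1 + n)
  have he : ∀ n, 2 ≤ e n := fun n => by
    have := mul_nonneg hα0.le (n.cast_nonneg : (0 : ℝ) ≤ n)
    simp only [e]; linarith
  have hz' : z = fun x => ∑' n, fracTerm a e 0 n x := by
    funext x; simp only [hz, fracTerm, a, e, sub_zero]
  have hD (j : ℝ) (hj : j ≤ 1) (x : ℝ) (hx : x ∈ Ioo 0 (t + 1)) :
      HasDerivAt (fun y => ∑' n, fracTerm a e j n y) (∑' n, fracTerm a e (j + 1) n x) x :=
    hasDerivAt_tsum_fracTerm (fun n => by linarith [he n])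
      (summable_norm_fracTerm_tail (-B) j hα0 (by linarith) m)
      (summable_norm_fracTerm_tail (-B) (j + 1) hα0 (by linarith) m) hx
  have ht' : t ∈ Ioo 0 (t + 1) := ⟨ht, lt_add_one t⟩
  have hderiv : deriv z =ᶠ[𝓝 t] fun y => ∑' n, fracTerm a e 1 n y := by
    filter_upwards [isOpen_Ioo.mem_nhds ht'] with y hy
    rw [hz', (hD 0 zero_le_one y hy).deriv, zero_add]
  refine ⟨hz' ▸ (hD 0 zero_le_one t ht').differentiableAt,
    hderiv.differentiableAt_iff.2 (hD 1 le_rfl t ht').differentiableAt, ?_⟩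
  rw [hderiv.deriv_eq, (hD 1 le_rfl t ht').deriv]
  refine tsum_congr fun n => ?_
  rw [fracTerm, one_add_one_eq_two, show e n - 2 + 1 = e n - 1 by ring]

/-- For `mα > 2`, the tail `z(t) = ∑_{n=m+1}^∞ (−B)^n t^{αn}/Γ(αn+1)` is twice
differentiable at every `t ∈ (0,T]` and its second derivative equals the termwise
differentiated series `∑_{n=m+1}^∞ (−B)^n t^{αn−2}/Γ(αn−1)`. -/
theorem tail_second_deriv_termwise (α B T : ℝ) (m : ℕ)
    (hα0 : 0 < α) (hα1 : α < 1) (hB : 0 < B) (hT : 0 < T)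
    (hm : 0 < m) (hmα : 2 < m * α)
    (z : ℝ → ℝ)
    (hz : ∀ t : ℝ, z t = ∑' n : ℕ,
      (-B) ^ (m + 1 + n) * t ^ (α * ((m : ℝ) + 1 + n)) /
        Real.Gamma (α * ((m : ℝ) + 1 + n) + 1)) :
    ∀ t ∈ Set.Ioc (0 : ℝ) T,
      DifferentiableAt ℝ z t ∧ DifferentiableAt ℝ (deriv z) t ∧
        deriv (deriv z) t = ∑' n : ℕ,
          (-B) ^ (m + 1 + n) * t ^ (α * ((m : ℝ) + 1 + n) - 2) /
            Real.Gamma (α * ((m : ℝ) + 1 + n) - 1) :=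
  tail_second_deriv_termwise_general α B T m hα0 hmα z hz
end

section
/- Let 0 < α < 1, B > 0 and let m be a positive integer with mα > 1. Then the function z(t) = ∑_{n=m+1}^∞ (−B)^n t^{αn} / Γ(αn + 1) satisfies z(0) = 0 and, for every t > 0, the Caputo derivative of order α of z exists and D^α z(t) + B z(t) = (−B)^{m+1} t^{αm} / Γ(αm + 1). -/
/-- The Caputo fractional derivative of order `α` (for `0 < α < 1`) with base point `0`. -/
noncomputable def caputoDeriv (α : ℝ) (y : ℝ → ℝ) : ℝ → ℝ :=
  fun t => (1 / Real.Gamma (1 - α)) * ∫ ξ in (0 : ℝ)..t, (t - ξ) ^ (-α) * deriv y ξ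

/-!
Write `γ = α (m + 1)`. Then `z = (-B)^(m+1) F_γ` with
`F_γ(t) = ∑ (-B)^n t^(αn+γ) / Γ(αn+γ+1)`. The Beta integral shows that the Caputo derivative
sends `t^β / Γ(β+1)` to `t^(β-α) / Γ(β-α+1)`, so termwise `D^α F_γ = F_(γ-α)`, and splitting off
the first term gives `F_(γ-α) = t^(γ-α) / Γ(γ-α+1) - B F_γ`. The termwise differentiation and
integration are justified by domination on `(0, t]`: `mα > 1` gives `γ ≥ 1`, so the
differentiated terms are bounded near `0`, and the bounds are summable because `Γ(αn + d)` grows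
faster than any geometric sequence (log-convexity of `Γ`).
-/

open Real Filter Topology Set MeasureTheory

theorem Real.rpow_sub_one_mul_Gamma_le_Gamma_add {x a : ℝ} (hx : 1 < x) (ha : 0 < a) :
    (x - 1) ^ a * Gamma x ≤ Gamma (x + a) := by
  have hx0 : 0 < x - 1 := sub_pos.2 hx
  have hΓx : 0 < Gamma x := Gamma_pos_of_pos (by linarith)
  -- `log ∘ Γ` is convex, and its slope over `[x - 1, x]` is `log (x - 1)`
  have hlog_rec : log (Gamma x) - log (Gamma (x - 1)) = log (x - 1) := by
    have hrec := Gamma_add_one hx0.ne'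
    rw [sub_add_cancel] at hrec
    rw [hrec, log_mul hx0.ne' (Gamma_pos_of_pos hx0).ne', add_sub_cancel_right]
  have hslope := convexOn_log_Gamma.slope_mono_adjacent (x := x - 1) (y := x) (z := x + a)
    (mem_Ioi.2 hx0) (mem_Ioi.2 (by linarith)) (by linarith) (by linarith)
  simp only [Function.comp_apply, sub_sub_cancel, div_one, add_sub_cancel_left, hlog_rec,
    le_div_iff₀ ha] at hslope
  rw [← log_le_log_iff (by positivity) (Gamma_pos_of_pos (by linarith)), log_mul (by positivity)
    hΓx.ne', log_rpow hx0]
  linarith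

theorem summable_pow_div_Gamma_mul_add {α : ℝ} (hα : 0 < α) (C d : ℝ) :
    Summable fun n : ℕ => C ^ n / Gamma (α * n + d) := by
  have hlarge : Tendsto (fun n : ℕ => α * n + d) atTop atTop :=
    tendsto_atTop_add_const_right _ d (tendsto_natCast_atTop_atTop.const_mul_atTop hα)
  have hgrowth : Tendsto (fun x : ℝ => (x - 1) ^ α) atTop atTop :=
    (tendsto_rpow_atTop hα).comp (tendsto_atTop_add_const_right _ (-1) tendsto_id)
  refine summable_of_ratio_norm_eventually_le (r := 1 / 2) (by norm_num) ?_
  filter_upwards [hlarge.eventually_gt_atTop 1,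
    hlarge.eventually (hgrowth.eventually_ge_atTop (2 * ‖C‖))] with n hn1 hn2
  set x := α * n + d
  have hΓx : 0 < Gamma x := Gamma_pos_of_pos (by linarith)
  have hΓxa : 0 < Gamma (x + α) := Gamma_pos_of_pos (by linarith)
  have hgrow := Real.rpow_sub_one_mul_Gamma_le_Gamma_add hn1 hα
  have hshift : α * ((n + 1 : ℕ) : ℝ) + d = x + α := by push_cast; ring
  rw [hshift, norm_div, norm_div, norm_pow, norm_pow, Real.norm_of_nonneg hΓx.le,
    Real.norm_of_nonneg hΓxa.le, pow_succ, div_le_iff₀ hΓxa]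
  have hratio : 2 * ‖C‖ * Gamma x ≤ Gamma (x + α) :=
    (mul_le_mul_of_nonneg_right hn2 hΓx.le).trans hgrow
  calc ‖C‖ ^ n * ‖C‖ = 1 / 2 * (‖C‖ ^ n / Gamma x) * (2 * ‖C‖ * Gamma x) := by
        field_simp
    _ ≤ 1 / 2 * (‖C‖ ^ n / Gamma x) * Gamma (x + α) := by gcongr

theorem integral_rpow_mul_sub_rpow {u v t : ℝ} (hu : 0 < u) (hv : 0 < v) (ht : 0 < t) :
    ∫ ξ in (0 : ℝ)..t, ξ ^ (u - 1) * (t - ξ) ^ (v - 1) =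
      t ^ (u + v - 1) * (Gamma u * Gamma v / Gamma (u + v)) := by
  apply Complex.ofReal_injective
  have hβ := Complex.betaIntegral_scaled u v ht
  rw [Complex.betaIntegral_eq_Gamma_mul_div _ _ (by simpa) (by simpa), ← Complex.ofReal_add,
    Complex.Gamma_ofReal, Complex.Gamma_ofReal, Complex.Gamma_ofReal] at hβ
  push_cast [← intervalIntegral.integral_ofReal, Complex.ofReal_cpow ht.le] at hβ ⊢
  rw [← hβ]
  refine intervalIntegral.integral_congr fun ξ hξ => ?_
  rw [uIcc_of_le ht.le] at hξ
  push_cast [Complex.ofReal_cpow hξ.1, Complex.ofReal_cpow (sub_nonneg.2 hξ.2)]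
  rfl

theorem intervalIntegrable_sub_rpow_neg {α : ℝ} (hα : α < 1) (t : ℝ) :
    IntervalIntegrable (fun ξ => (t - ξ) ^ (-α)) volume 0 t := by
  simpa using ((intervalIntegral.intervalIntegrable_rpow' (a := t) (b := 0)
    (by linarith : -1 < -α)).comp_sub_left t)

theorem caputoDeriv_const_mul (α a : ℝ) (y : ℝ → ℝ) (t : ℝ) :
    caputoDeriv α (fun s => a * y s) t = a * caputoDeriv α y t := by
  simp only [caputoDeriv, deriv_const_mul_field', mul_left_comm _ a,
    intervalIntegral.integral_const_mul]

noncomputable def fracPowTerm (α γ c : ℝ) (n : ℕ) (t : ℝ) : ℝ :=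
  c ^ n * t ^ (α * n + γ) / Gamma (α * n + γ + 1)

/-- `fracPowSeries α γ c t = t ^ γ * E_{α, γ + 1} (c * t ^ α)`, where `E_{α, β}` is the
two-parameter Mittag-Leffler function. -/
noncomputable def fracPowSeries (α γ c t : ℝ) : ℝ :=
  ∑' n, fracPowTerm α γ c n t

section

variable {α γ c t : ℝ}

theorem summable_fracPowTerm (hα : 0 < α) (ht : 0 < t) : Summable (fracPowTerm α γ c · t) := by
  have h := (summable_pow_div_Gamma_mul_add hα (c * t ^ α) (γ + 1)).mul_left (t ^ γ)
  refine h.congr fun n => ?_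
  rw [fracPowTerm, rpow_add ht, mul_pow, ← rpow_natCast (t ^ α), ← rpow_mul ht.le, add_assoc]
  ring

theorem norm_fracPowTerm_le (hα : 0 ≤ α) (hγ : 0 ≤ γ) {ξ : ℝ} (hξ : 0 ≤ ξ) (hξt : ξ ≤ t)
    (n : ℕ) : ‖fracPowTerm α γ c n ξ‖ ≤ fracPowTerm α γ |c| n t := by
  have he : 0 ≤ α * n + γ := by positivity
  have hΓ : 0 < Gamma (α * n + γ + 1) := Gamma_pos_of_pos (by linarith)
  rw [fracPowTerm, fracPowTerm, norm_div, norm_mul, norm_pow, Real.norm_of_nonneg hΓ.le,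
    Real.norm_of_nonneg (rpow_nonneg hξ _), Real.norm_eq_abs]
  gcongr

theorem norm_fracPowSeries_le (hα : 0 < α) (hγ : 0 ≤ γ) {ξ : ℝ} (hξ : 0 ≤ ξ) (hξt : ξ ≤ t)
    (ht : 0 < t) : ‖fracPowSeries α γ c ξ‖ ≤ fracPowSeries α γ |c| t := by
  have hbound := norm_fracPowTerm_le (c := c) hα.le hγ hξ hξt
  have hsum := summable_fracPowTerm (γ := γ) (c := |c|) hα ht
  have hnorm := hsum.of_nonneg_of_le (fun n => norm_nonneg _) hbound
  exact (norm_tsum_le_tsum_norm hnorm).trans (hnorm.tsum_le_tsum hbound hsum)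

theorem fracPowSeries_zero (hα : 0 ≤ α) (hγ : 0 < γ) : fracPowSeries α γ c 0 = 0 := by
  simp only [fracPowSeries, fracPowTerm]
  exact (tsum_congr fun n => by
    rw [zero_rpow (by positivity : α * n + γ ≠ 0), mul_zero, zero_div]).trans tsum_zero

theorem hasDerivAt_fracPowTerm (hα : 0 ≤ α) (hγ : 0 < γ) (n : ℕ) {ξ : ℝ} (hξ : 0 < ξ) :
    HasDerivAt (fracPowTerm α γ c n) (fracPowTerm α (γ - 1) c n ξ) ξ := by
  have he : 0 < α * n + γ := by positivity
  have h := ((hasDerivAt_rpow_const (p := α * n + γ) (Or.inl hξ.ne')).const_mul (c ^ n)).div_const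
    (Gamma (α * n + γ + 1))
  refine h.congr_deriv ?_
  rw [fracPowTerm, Gamma_add_one he.ne', add_sub_assoc', sub_add_cancel]
  field_simp

theorem hasDerivAt_fracPowSeries (hα : 0 < α) (hγ : 1 ≤ γ) {ξ : ℝ} (hξ : 0 < ξ) :
    HasDerivAt (fracPowSeries α γ c) (fracPowSeries α (γ - 1) c ξ) ξ :=
  hasDerivAt_tsum_of_isPreconnected (summable_fracPowTerm (γ := γ - 1) (c := |c|) hα
      (by linarith : 0 < ξ + 1)) isOpen_Ioo isPreconnected_Ioo
    (fun n _ hy => hasDerivAt_fracPowTerm hα.le (by linarith) n hy.1)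
    (fun n _ hy => norm_fracPowTerm_le hα.le (by linarith) hy.1.le hy.2.le n)
    (⟨hξ, by linarith⟩ : ξ ∈ Ioo 0 (ξ + 1)) (summable_fracPowTerm hα hξ) ⟨hξ, by linarith⟩

theorem fracPowTerm_succ (n : ℕ) :
    fracPowTerm α γ c (n + 1) t = c * fracPowTerm α (γ + α) c n t := by
  simp only [fracPowTerm]
  push_cast
  rw [show α * (n + 1) + γ = α * n + (γ + α) by ring, pow_succ]
  ring

theorem fracPowSeries_eq_add (hα : 0 < α) (ht : 0 < t) :
    fracPowSeries α γ c t = t ^ γ / Gamma (γ + 1) + c * fracPowSeries α (γ + α) c t := by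
  rw [fracPowSeries, (summable_fracPowTerm hα ht).tsum_eq_zero_add, fracPowSeries,
    ← tsum_mul_left, tsum_congr fun n => fracPowTerm_succ n]
  simp [fracPowTerm]

theorem integral_sub_rpow_mul_fracPowTerm (hα0 : 0 ≤ α) (hα1 : α < 1) (hγ : -1 < γ)
    (ht : 0 < t) (n : ℕ) :
    ∫ ξ in (0 : ℝ)..t, (t - ξ) ^ (-α) * fracPowTerm α γ c n ξ =
      Gamma (1 - α) * fracPowTerm α (γ + 1 - α) c n t := by
  have hβ : 0 < α * n + γ + 1 := by linarith [mul_nonneg hα0 n.cast_nonneg]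
  have hΓ : Gamma (α * n + γ + 1) ≠ 0 := (Gamma_pos_of_pos hβ).ne'
  have hbeta := integral_rpow_mul_sub_rpow hβ (by linarith : 0 < 1 - α) ht
  rw [add_sub_cancel_right, sub_sub_cancel_left, show α * n + γ + 1 + (1 - α) - 1 =
    α * n + (γ + 1 - α) by ring, show α * n + γ + 1 + (1 - α) = α * n + (γ + 1 - α) + 1 by ring]
    at hbeta
  simp only [fracPowTerm, mul_div_assoc', mul_left_comm _ (c ^ n), intervalIntegral.integral_div,
    intervalIntegral.integral_const_mul]
  simp_rw [mul_comm ((t - _) ^ (-α)), hbeta]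
  field_simp

theorem norm_sub_rpow_mul_deriv_fracPowSeries_le (hα : 0 < α) (hγ : 1 ≤ γ) (ht : 0 < t)
    {ξ : ℝ} (hξ : ξ ∈ Ioc 0 t) :
    ‖(t - ξ) ^ (-α) * deriv (fracPowSeries α γ c) ξ‖ ≤
      (t - ξ) ^ (-α) * fracPowSeries α (γ - 1) |c| t := by
  have hw : 0 ≤ (t - ξ) ^ (-α) := rpow_nonneg (sub_nonneg.2 hξ.2) _
  rw [norm_mul, Real.norm_of_nonneg hw, (hasDerivAt_fracPowSeries hα hγ hξ.1).deriv]
  gcongr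
  exact norm_fracPowSeries_le hα (by linarith) hξ.1.le hξ.2 ht

theorem intervalIntegrable_caputo_fracPowSeries (hα0 : 0 < α) (hα1 : α < 1) (hγ : 1 ≤ γ)
    (ht : 0 < t) :
    IntervalIntegrable (fun ξ => (t - ξ) ^ (-α) * deriv (fracPowSeries α γ c) ξ) volume 0 t :=
  ((intervalIntegrable_sub_rpow_neg hα1 t).mul_const _).mono_fun'
    (Measurable.aestronglyMeasurable (by fun_prop))
    ((ae_restrict_iff' measurableSet_uIoc).2 <| Eventually.of_forall fun _ hξ =>
      norm_sub_rpow_mul_deriv_fracPowSeries_le hα0 hγ ht (uIoc_of_le ht.le ▸ hξ))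

theorem caputoDeriv_fracPowSeries (hα0 : 0 < α) (hα1 : α < 1) (hγ : 1 ≤ γ) (ht : 0 < t) :
    caputoDeriv α (fracPowSeries α γ c) t = fracPowSeries α (γ - α) c t := by
  have hsum : HasSum (fun n => ∫ ξ in (0 : ℝ)..t, (t - ξ) ^ (-α) * fracPowTerm α (γ - 1) c n ξ)
      (∫ ξ in (0 : ℝ)..t, (t - ξ) ^ (-α) * deriv (fracPowSeries α γ c) ξ) := by
    -- dominated convergence, with the series at `t` for `|c|` as majorant
    refine intervalIntegral.hasSum_integral_of_dominated_convergence
      (fun n ξ => (t - ξ) ^ (-α) * fracPowTerm α (γ - 1) |c| n t) (fun n => ?_) (fun n => ?_)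
      ?_ ?_ ?_
    · exact Measurable.aestronglyMeasurable (by unfold fracPowTerm; fun_prop)
    · refine Eventually.of_forall fun ξ hξ => ?_
      rw [uIoc_of_le ht.le] at hξ
      have hw : 0 ≤ (t - ξ) ^ (-α) := rpow_nonneg (sub_nonneg.2 hξ.2) _
      rw [norm_mul, Real.norm_of_nonneg hw]
      exact mul_le_mul_of_nonneg_left (norm_fracPowTerm_le hα0.le (by linarith) hξ.1.le hξ.2 n) hw
    · exact Eventually.of_forall fun ξ _ => (summable_fracPowTerm hα0 ht).mul_left _
    · simp_rw [tsum_mul_left]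
      exact (intervalIntegrable_sub_rpow_neg hα1 t).mul_const _
    · refine Eventually.of_forall fun ξ hξ => ?_
      rw [uIoc_of_le ht.le] at hξ
      rw [(hasDerivAt_fracPowSeries hα0 hγ hξ.1).deriv]
      exact (summable_fracPowTerm hα0 hξ.1).hasSum.mul_left _
  have hterm (n : ℕ) : ∫ ξ in (0 : ℝ)..t, (t - ξ) ^ (-α) * fracPowTerm α (γ - 1) c n ξ =
      Gamma (1 - α) * fracPowTerm α (γ - α) c n t := by
    rw [integral_sub_rpow_mul_fracPowTerm hα0.le hα1 (by linarith) ht, sub_add_cancel]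
  have hΓ : Gamma (1 - α) ≠ 0 := (Gamma_pos_of_pos (by linarith)).ne'
  rw [caputoDeriv, ← hsum.tsum_eq, tsum_congr hterm, tsum_mul_left, fracPowSeries]
  field_simp

end

theorem tail_solves_two_term_equation_general (α B : ℝ) (m : ℕ)
    (hα0 : 0 < α) (hα1 : α < 1) (hmα : 1 < m * α)
    (z : ℝ → ℝ)
    (hz : ∀ t : ℝ, z t = ∑' n : ℕ,
      (-B) ^ (m + 1 + n) * t ^ (α * ((m : ℝ) + 1 + n)) /
        Real.Gamma (α * ((m : ℝ) + 1 + n) + 1)) :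
    z 0 = 0 ∧
    ∀ t : ℝ, 0 < t →
      IntervalIntegrable (fun ξ => (t - ξ) ^ (-α) * deriv z ξ)
        MeasureTheory.volume 0 t ∧
      caputoDeriv α z t + B * z t =
        (-B) ^ (m + 1) * t ^ (α * m) / Real.Gamma (α * m + 1) := by
  have hγ : 1 ≤ α * m + α := by nlinarith
  have hzF : z = fun t => (-B) ^ (m + 1) * fracPowSeries α (α * m + α) (-B) t := by
    funext t
    rw [hz, fracPowSeries, ← tsum_mul_left]
    refine tsum_congr fun n => ?_
    rw [fracPowTerm, show α * ((m : ℝ) + 1 + n) = α * n + (α * m + α) by ring, pow_add]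
    ring
  subst hzF
  refine ⟨by simp only [fracPowSeries_zero hα0.le (by linarith : 0 < α * m + α), mul_zero],
    fun t ht => ⟨?_, ?_⟩⟩
  · simp only [deriv_const_mul_field', mul_left_comm _ ((-B) ^ (m + 1))]
    exact (intervalIntegrable_caputo_fracPowSeries hα0 hα1 hγ ht).const_mul _
  · rw [caputoDeriv_const_mul, caputoDeriv_fracPowSeries hα0 hα1 hγ ht, add_sub_cancel_right,
      fracPowSeries_eq_add hα0 ht]
    ring

/-- The tail `z(t) = ∑_{n=m+1}^∞ (−B)^n t^{αn}/Γ(αn+1)` of `E_α(−B t^α)` satisfies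
`z(0) = 0` and, for every `t > 0`, the Caputo derivative of order `α` of `z` exists and
`D^α z(t) + B z(t) = (−B)^{m+1} t^{αm}/Γ(αm+1)`. -/
theorem tail_solves_two_term_equation (α B : ℝ) (m : ℕ)
    (hα0 : 0 < α) (hα1 : α < 1) (hB : 0 < B) (hm : 0 < m) (hmα : 1 < m * α)
    (z : ℝ → ℝ)
    (hz : ∀ t : ℝ, z t = ∑' n : ℕ,
      (-B) ^ (m + 1 + n) * t ^ (α * ((m : ℝ) + 1 + n)) /
        Real.Gamma (α * ((m : ℝ) + 1 + n) + 1)) :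
    z 0 = 0 ∧
    ∀ t : ℝ, 0 < t →
      IntervalIntegrable (fun ξ => (t - ξ) ^ (-α) * deriv z ξ)
        MeasureTheory.volume 0 t ∧
      caputoDeriv α z t + B * z t =
        (-B) ^ (m + 1) * t ^ (α * m) / Real.Gamma (α * m + 1) :=
  tail_solves_two_term_equation_general α B m hα0 hα1 hmα z hz
end

section
/- Let 0 < α < 1 and let m be a positive integer with mα > 1. Define a_n = 2(−1)^n + (−2)^n and z(t) = ∑_{n=m+1}^∞ a_n t^{αn} / Γ(αn + 1). Then z(0) = 0, lim_{t→0⁺} D^α z(t) = 0, and for every t > 0 the twice-iterated Caputo derivative of z satisfies D^α(D^α z)(t) + 3 D^α z(t) + 2 z(t) = F(t), where F(t) = −(2 a_{m−1} + 3 a_m) t^{(m−1)α} / Γ((m−1)α + 1) − 2 a_m t^{mα} / Γ(mα + 1). -/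
/-!
Write `E_e(t) = t ^ e / Γ(e + 1)`. The Beta integral gives `D^α E_e = E_{e-α}` for `e ≥ 1`, and
`D^α` can be applied termwise to `∑ c_k E_{e+αk}` when `c_k` grows at most geometrically, because
`Γ` outgrows every exponential. Hence `z`, `D^α z` and `D^α D^α z` are the series
`∑ a_{m+1+k} E_{(m-1+j)α + αk}` for `j = 2, 1, 0`. Since `a_{n+2} + 3a_{n+1} + 2a_n = 0`, the
combination `D^α D^α z + 3D^α z + 2z` cancels except for the first two terms, which make up `F`.
-/

open Real MeasureTheory Set Filter Topology

lemma rpow_mul_exp_neg_le_Gamma_add_one {K x : ℝ} (hK : 0 ≤ K) (hx : 0 ≤ x) :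
    K ^ x * exp (-K) ≤ Gamma (x + 1) := by
  have hint : IntegrableOn (fun s : ℝ => exp (-s) * s ^ x) (Ioi 0) := by
    simpa using GammaIntegral_convergent (s := x + 1) (by linarith)
  rw [Gamma_eq_integral (by linarith), add_sub_cancel_right, ← integral_exp_neg_Ioi K,
    ← integral_const_mul]
  calc ∫ s in Ioi K, K ^ x * exp (-s)
      ≤ ∫ s in Ioi K, exp (-s) * s ^ x := by
        refine setIntegral_mono_on ((integrableOn_exp_neg_Ioi K).const_mul _)
          (hint.mono_set (Ioi_subset_Ioi hK)) measurableSet_Ioi fun s hs => ?_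
        rw [mul_comm]
        gcongr
        exact le_of_lt hs
    _ ≤ ∫ s in Ioi 0, exp (-s) * s ^ x :=
        setIntegral_mono_set hint
          (ae_restrict_of_forall_mem measurableSet_Ioi fun s hs =>
            mul_nonneg (exp_pos _).le (rpow_nonneg (le_of_lt hs) _))
          (Ioi_subset_Ioi hK).eventuallyLE

lemma summable_pow_div_Gamma_s15 {β c b : ℝ} (hβ : 0 < β) (hc : 1 ≤ c) (hb : 0 ≤ b) :
    Summable fun n : ℕ => b ^ n / Gamma (β * n + c) := by
  -- `K ^ β = 2b + 1`, so `Γ(βn + c) ≥ K ^ (βn) e^{-K}` beats `b ^ n` by a geometric factor.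
  set K : ℝ := (2 * b + 1) ^ β⁻¹
  have hK : 1 ≤ K := one_le_rpow (by linarith) (by positivity)
  have hKn (n : ℕ) : K ^ (β * n) = (2 * b + 1) ^ n := by
    rw [← rpow_mul (by linarith), inv_mul_cancel_left₀ hβ.ne', rpow_natCast]
  refine Summable.of_nonneg_of_le (fun n => by positivity) (fun n => ?_)
    ((summable_geometric_of_lt_one (by positivity) (r := b / (2 * b + 1))
      (by rw [div_lt_one (by linarith)]; linarith)).mul_left (exp K))
  have hx : 0 ≤ β * n + c - 1 := by
    have : 0 ≤ β * n := by positivity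
    linarith
  have hΓ : (2 * b + 1) ^ n * exp (-K) ≤ Gamma (β * n + c) := by
    calc (2 * b + 1) ^ n * exp (-K) ≤ K ^ (β * n + c - 1) * exp (-K) := by
          rw [← hKn]
          exact mul_le_mul_of_nonneg_right (rpow_le_rpow_of_exponent_le hK (by linarith))
            (exp_pos _).le
      _ ≤ Gamma (β * n + c) := by
          simpa using rpow_mul_exp_neg_le_Gamma_add_one (by linarith) hx
  have hΓpos : 0 < (2 * b + 1) ^ n * exp (-K) := by positivity
  calc b ^ n / Gamma (β * n + c) ≤ b ^ n / ((2 * b + 1) ^ n * exp (-K)) := by gcongr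
    _ = exp K * (b / (2 * b + 1)) ^ n := by
        rw [exp_neg, div_pow]
        field_simp

lemma integral_sub_rpow_mul_rpow {u v t : ℝ} (hu : 0 < u) (hv : 0 < v) (ht : 0 < t) :
    ∫ ξ in (0 : ℝ)..t, (t - ξ) ^ (u - 1) * ξ ^ (v - 1) =
      Gamma u * Gamma v / Gamma (u + v) * t ^ (u + v - 1) := by
  have hΓ : Complex.Gamma ((u + v : ℝ) : ℂ) ≠ 0 := by
    rw [Complex.Gamma_ofReal]
    exact_mod_cast (Gamma_pos_of_pos (add_pos hu hv)).ne'
  have hbeta : Complex.betaIntegral v u =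
      Complex.Gamma v * Complex.Gamma u / Complex.Gamma ((u + v : ℝ) : ℂ) := by
    rw [eq_div_iff hΓ, Complex.Gamma_mul_Gamma_eq_betaIntegral (by simpa) (by simpa)]
    push_cast
    ring_nf
  have hcomplex : ((∫ ξ in (0 : ℝ)..t, (t - ξ) ^ (u - 1) * ξ ^ (v - 1) : ℝ) : ℂ) =
      ∫ ξ in (0 : ℝ)..t, (ξ : ℂ) ^ ((v : ℂ) - 1) * ((t : ℂ) - ξ) ^ ((u : ℂ) - 1) := by
    rw [← intervalIntegral.integral_ofReal]
    refine intervalIntegral.integral_congr fun ξ hξ => ?_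
    rw [uIcc_of_le ht.le] at hξ
    have h₁ : (0 : ℝ) ≤ t - ξ := sub_nonneg.mpr hξ.2
    push_cast [Complex.ofReal_cpow h₁, Complex.ofReal_cpow hξ.1]
    ring
  have := hcomplex.trans (Complex.betaIntegral_scaled v u ht)
  rw [hbeta, show (v : ℂ) + u - 1 = ((u + v - 1 : ℝ) : ℂ) by push_cast; ring,
    ← Complex.ofReal_cpow ht.le, Complex.Gamma_ofReal, Complex.Gamma_ofReal,
    Complex.Gamma_ofReal] at this
  rw [← Complex.ofReal_inj, this]
  push_cast
  ring

noncomputable def powDivGamma (e t : ℝ) : ℝ := t ^ e / Gamma (e + 1)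

lemma integral_sub_rpow_neg_mul_powDivGamma {α p t : ℝ} (hα : α < 1) (hp : -1 < p)
    (ht : 0 < t) :
    ∫ ξ in (0 : ℝ)..t, (t - ξ) ^ (-α) * powDivGamma p ξ =
      Gamma (1 - α) * powDivGamma (p + 1 - α) t := by
  have hβ := integral_sub_rpow_mul_rpow (u := 1 - α) (v := p + 1) (by linarith) (by linarith) ht
  simp only [sub_sub_cancel_left, add_sub_cancel_right] at hβ
  have hΓ : Gamma (p + 1) ≠ 0 := (Gamma_pos_of_pos (by linarith)).ne'
  simp only [powDivGamma, mul_div_assoc', intervalIntegral.integral_div, hβ]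
  rw [show 1 - α + (p + 1) = p + 1 - α + 1 by ring, show p + 1 - α + 1 - 1 = p + 1 - α by ring]
  field_simp

lemma intervalIntegrable_sub_rpow_neg_mul_powDivGamma {α p t : ℝ} (hα : α < 1)
    (hp : -1 < p) (ht : 0 < t) :
    IntervalIntegrable (fun ξ => (t - ξ) ^ (-α) * powDivGamma p ξ) volume 0 t := by
  -- A non-integrable function has integral `0`, and this integral is positive.
  refine intervalIntegral.intervalIntegrable_of_integral_ne_zero ?_
  rw [integral_sub_rpow_neg_mul_powDivGamma hα hp ht]
  have : 0 < Gamma (1 - α) := Gamma_pos_of_pos (by linarith)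
  have : 0 < Gamma (p + 1 - α + 1) := Gamma_pos_of_pos (by linarith)
  unfold powDivGamma
  positivity

lemma hasDerivAt_powDivGamma {e t : ℝ} (he : 0 < e) (ht : t ≠ 0) :
    HasDerivAt (powDivGamma e) (powDivGamma (e - 1) t) t := by
  have : HasDerivAt (powDivGamma e) (e * t ^ (e - 1) / Gamma (e + 1)) t :=
    ((hasDerivAt_rpow_const (p := e) (Or.inl ht)).div_const (Gamma (e + 1)))
  convert this using 1
  rw [powDivGamma, sub_add_cancel, Gamma_add_one he.ne']
  field_simp [(Gamma_pos_of_pos he).ne']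

lemma caputoDeriv_congr {α t : ℝ} {f g : ℝ → ℝ} (hfg : EqOn f g (Ioi 0)) (ht : 0 ≤ t) :
    caputoDeriv α f t = caputoDeriv α g t := by
  rw [caputoDeriv, caputoDeriv, intervalIntegral.integral_of_le ht,
    intervalIntegral.integral_of_le ht]
  congr 1
  refine setIntegral_congr_fun measurableSet_Ioc fun ξ hξ => ?_
  rw [(eventuallyEq_of_mem (Ioi_mem_nhds hξ.1) hfg).deriv_eq]

noncomputable def fractionalPowerSeries (α e : ℝ) (c : ℕ → ℝ) (t : ℝ) : ℝ :=
  ∑' k : ℕ, c k * powDivGamma (e + α * k) t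

section FractionalPowerSeries

variable {α e A r t : ℝ} {c : ℕ → ℝ}

lemma summable_fractionalPowerSeries (hα : 0 < α) (he : 0 ≤ e) (hr : 0 ≤ r)
    (hc : ∀ k, |c k| ≤ A * r ^ k) (ht : 0 < t) :
    Summable fun k : ℕ => c k * powDivGamma (e + α * k) t := by
  refine .of_norm_bounded ((summable_pow_div_Gamma_s15 hα (c := e + 1) (by linarith)
    (by positivity : 0 ≤ r * t ^ α)).mul_left (A * t ^ e)) fun k => ?_
  have hΓ : 0 < Gamma (e + α * k + 1) := Gamma_pos_of_pos (by positivity)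
  rw [norm_mul, Real.norm_eq_abs, Real.norm_of_nonneg (by unfold powDivGamma; positivity),
    powDivGamma, rpow_add ht, mul_pow, show α * k + (e + 1) = e + α * k + 1 by ring]
  calc |c k| * (t ^ e * t ^ (α * k) / Gamma (e + α * k + 1))
      ≤ A * r ^ k * (t ^ e * t ^ (α * k) / Gamma (e + α * k + 1)) := by
        gcongr
        exact hc k
    _ = _ := by rw [rpow_mul ht.le, rpow_natCast]; ring

lemma summable_abs_mul_powDivGamma (hα : 0 < α) (he : 0 ≤ e) (hr : 0 ≤ r)
    (hc : ∀ k, |c k| ≤ A * r ^ k) (ht : 0 < t) :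
    Summable fun k : ℕ => |c k| * powDivGamma (e + α * k) t :=
  summable_fractionalPowerSeries (c := fun k => |c k|) hα he hr (by simpa using hc) ht

lemma fractionalPowerSeries_apply_zero (hα : 0 ≤ α) (he : 0 < e) :
    fractionalPowerSeries α e c 0 = 0 := by
  have (k : ℕ) : (0 : ℝ) ^ (e + α * k) = 0 := zero_rpow (by positivity)
  simp [fractionalPowerSeries, powDivGamma, this]

lemma tendsto_fractionalPowerSeries_nhdsGT_zero (hα : 0 < α) (he : 0 < e) (hr : 0 ≤ r)
    (hc : ∀ k, |c k| ≤ A * r ^ k) :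
    Tendsto (fractionalPowerSeries α e c) (𝓝[>] 0) (𝓝 0) := by
  set M := fractionalPowerSeries α e (fun k => |c k|) 1
  have hbound : ∀ t ∈ Ioc (0 : ℝ) 1, ‖fractionalPowerSeries α e c t‖ ≤ t ^ e * M := by
    intro t ⟨ht0, ht1⟩
    have hterm (k : ℕ) : ‖c k * powDivGamma (e + α * k) t‖ ≤
        t ^ e * (|c k| * powDivGamma (e + α * k) 1) := by
      have : t ^ (e + α * k) ≤ t ^ e :=
        rpow_le_rpow_of_exponent_ge ht0 ht1 (le_add_of_nonneg_right (by positivity))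
      have : 0 < Gamma (e + α * k + 1) := Gamma_pos_of_pos (by positivity)
      rw [norm_mul, Real.norm_eq_abs, Real.norm_of_nonneg (by unfold powDivGamma; positivity)]
      simp only [powDivGamma, one_rpow]
      calc |c k| * (t ^ (e + α * k) / Gamma (e + α * k + 1))
          ≤ |c k| * (t ^ e / Gamma (e + α * k + 1)) := by gcongr
        _ = t ^ e * (|c k| * (1 / Gamma (e + α * k + 1))) := by ring
    calc ‖fractionalPowerSeries α e c t‖
        ≤ ∑' k : ℕ, t ^ e * (|c k| * powDivGamma (e + α * k) 1) :=
          tsum_of_norm_bounded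
            ((summable_abs_mul_powDivGamma hα he.le hr hc one_pos).mul_left _).hasSum hterm
      _ = t ^ e * M := tsum_mul_left
  have hpow : Tendsto (fun t : ℝ => t ^ e * M) (𝓝[>] 0) (𝓝 0) := by
    simpa [zero_rpow he.ne'] using
      ((continuousAt_rpow_const 0 e (Or.inr he.le)).tendsto.mono_left
        nhdsWithin_le_nhds).mul_const M
  exact squeeze_zero_norm' (mem_of_superset (Ioc_mem_nhdsGT one_pos) hbound) hpow

lemma hasDerivAt_fractionalPowerSeries (hα : 0 < α) (he : 1 ≤ e) (hr : 0 ≤ r)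
    (hc : ∀ k, |c k| ≤ A * r ^ k) (ht : 0 < t) :
    HasDerivAt (fractionalPowerSeries α e c) (fractionalPowerSeries α (e - 1) c t) t := by
  have hexp (k : ℕ) : e + α * k - 1 = e - 1 + α * k := by ring
  have hderiv (k : ℕ) (y : ℝ) (hy : y ∈ Ioo 0 (t + 1)) :
      HasDerivAt (fun s => c k * powDivGamma (e + α * k) s)
        (c k * powDivGamma (e - 1 + α * k) y) y := by
    rw [← hexp]
    exact (hasDerivAt_powDivGamma (by positivity) hy.1.ne').const_mul (c k)
  have hbound (k : ℕ) (y : ℝ) (hy : y ∈ Ioo 0 (t + 1)) :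
      ‖c k * powDivGamma (e - 1 + α * k) y‖ ≤ |c k| * powDivGamma (e - 1 + α * k) (t + 1) := by
    have : 0 < Gamma (e - 1 + α * k + 1) := Gamma_pos_of_pos (by positivity)
    have : 0 < y := hy.1
    rw [norm_mul, Real.norm_eq_abs, Real.norm_of_nonneg (by unfold powDivGamma; positivity)]
    unfold powDivGamma
    gcongr
    exact hy.2.le
  exact hasDerivAt_tsum_of_isPreconnected
    (summable_abs_mul_powDivGamma hα (by linarith) hr hc (by linarith)) isOpen_Ioo
    isPreconnected_Ioo hderiv hbound (⟨ht, by linarith⟩ : t ∈ Ioo 0 (t + 1))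
    (summable_fractionalPowerSeries hα (by linarith) hr hc ht) ⟨ht, by linarith⟩

lemma caputoDeriv_fractionalPowerSeries (hα0 : 0 < α) (hα1 : α < 1) (he : 1 ≤ e)
    (hr : 0 ≤ r) (hc : ∀ k, |c k| ≤ A * r ^ k) (ht : 0 < t) :
    caputoDeriv α (fractionalPowerSeries α e c) t = fractionalPowerSeries α (e - α) c t := by
  set F : ℕ → ℝ → ℝ := fun k ξ => c k * ((t - ξ) ^ (-α) * powDivGamma (e - 1 + α * k) ξ)
  have hp (k : ℕ) : -1 < e - 1 + α * k := by
    have : 0 ≤ α * k := by positivity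
    linarith
  have hint (k : ℕ) :
      IntegrableOn (fun ξ => (t - ξ) ^ (-α) * powDivGamma (e - 1 + α * k) ξ) (Ioc 0 t) :=
    (intervalIntegrable_iff_integrableOn_Ioc_of_le ht.le).mp
      (intervalIntegrable_sub_rpow_neg_mul_powDivGamma hα1 (hp k) ht)
  have hval (k : ℕ) : ∫ ξ in Ioc 0 t, (t - ξ) ^ (-α) * powDivGamma (e - 1 + α * k) ξ =
      Gamma (1 - α) * powDivGamma (e - α + α * k) t := by
    rw [← intervalIntegral.integral_of_le ht.le,
      integral_sub_rpow_neg_mul_powDivGamma hα1 (hp k) ht]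
    ring_nf
  have hnorm (k : ℕ) :
      ∫ ξ in Ioc 0 t, ‖F k ξ‖ = |c k| * (Gamma (1 - α) * powDivGamma (e - α + α * k) t) := by
    rw [← hval, ← integral_const_mul]
    refine setIntegral_congr_fun measurableSet_Ioc fun ξ hξ => ?_
    have : 0 ≤ t - ξ := sub_nonneg.mpr hξ.2
    have : 0 < Gamma (e - 1 + α * k + 1) := Gamma_pos_of_pos (by linarith [hp k])
    have : 0 ≤ powDivGamma (e - 1 + α * k) ξ := by
      have := hξ.1
      unfold powDivGamma
      positivity
    rw [norm_mul, norm_mul, Real.norm_eq_abs, Real.norm_of_nonneg (by positivity),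
      Real.norm_of_nonneg this]
  have hsum : Summable fun k => ∫ ξ in Ioc 0 t, ‖F k ξ‖ := by
    simp_rw [hnorm, mul_left_comm _ (Gamma (1 - α))]
    exact (summable_abs_mul_powDivGamma hα0 (by linarith) hr hc ht).mul_left _
  have hΓ : Gamma (1 - α) ≠ 0 := (Gamma_pos_of_pos (by linarith)).ne'
  calc caputoDeriv α (fractionalPowerSeries α e c) t
      = 1 / Gamma (1 - α) * ∫ ξ in Ioc 0 t, ∑' k, F k ξ := by
        rw [caputoDeriv, intervalIntegral.integral_of_le ht.le]
        congr 1
        refine setIntegral_congr_fun measurableSet_Ioc fun ξ hξ => ?_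
        rw [(hasDerivAt_fractionalPowerSeries hα0 he hr hc hξ.1).deriv, fractionalPowerSeries,
          ← tsum_mul_left]
        exact tsum_congr fun k => by ring
    _ = 1 / Gamma (1 - α) * ∑' k, ∫ ξ in Ioc 0 t, F k ξ := by
        rw [integral_tsum_of_summable_integral_norm (fun k => (hint k).const_mul (c k)) hsum]
    _ = fractionalPowerSeries α (e - α) c t := by
        simp_rw [F, integral_const_mul, hval]
        rw [fractionalPowerSeries, ← tsum_mul_left]
        exact tsum_congr fun k => by field_simp

lemma fractionalPowerSeries_eq_add_shift
    (hs : Summable fun k : ℕ => c k * powDivGamma (e + α * k) t) :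
    fractionalPowerSeries α e c t =
      c 0 * powDivGamma e t + fractionalPowerSeries α (e + α) (fun k => c (k + 1)) t := by
  rw [fractionalPowerSeries, hs.tsum_eq_zero_add, fractionalPowerSeries]
  simp only [Nat.cast_zero, mul_zero, add_zero, Nat.cast_add, Nat.cast_one]
  congr 1
  exact tsum_congr fun k => by ring_nf

lemma fractionalPowerSeries_linear_recurrence {p q : ℝ} (hα : 0 < α) (he : 0 ≤ e)
    (hr : 0 ≤ r) (hc : ∀ k, |c k| ≤ A * r ^ k)
    (hrec : ∀ k, c (k + 2) + p * c (k + 1) + q * c k = 0) (ht : 0 < t) :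
    fractionalPowerSeries α e c t + p * fractionalPowerSeries α (e + α) c t +
        q * fractionalPowerSeries α (e + α + α) c t =
      c 0 * powDivGamma e t + (c 1 + p * c 0) * powDivGamma (e + α) t := by
  have hshift (j : ℕ) (k : ℕ) : |c (k + j)| ≤ (A * r ^ j) * r ^ k := by
    rw [mul_assoc, ← pow_add, add_comm j]
    exact hc (k + j)
  have hsum (j : ℕ) {e' : ℝ} (he' : 0 ≤ e') :
      Summable fun k : ℕ => c (k + j) * powDivGamma (e' + α * k) t :=
    summable_fractionalPowerSeries hα he' hr (hshift j) ht
  rw [fractionalPowerSeries_eq_add_shift (summable_fractionalPowerSeries hα he hr hc ht),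
    fractionalPowerSeries_eq_add_shift (hsum 1 (by positivity)),
    fractionalPowerSeries_eq_add_shift (e := e + α)
      (summable_fractionalPowerSeries hα (by positivity) hr hc ht)]
  have htail : fractionalPowerSeries α (e + α + α) (fun k => c (k + 1 + 1)) t +
      p * fractionalPowerSeries α (e + α + α) (fun k => c (k + 1)) t +
      q * fractionalPowerSeries α (e + α + α) c t = 0 := by
    simp only [fractionalPowerSeries]
    rw [← tsum_mul_left, ← tsum_mul_left, ← (hsum 2 (by positivity)).tsum_add
      ((hsum 1 (by positivity)).mul_left p), ← Summable.tsum_add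
      (((hsum 2 (by positivity)).add ((hsum 1 (by positivity)).mul_left p)))
      ((summable_fractionalPowerSeries hα (by positivity) hr hc ht).mul_left q)]
    refine (tsum_congr fun k => ?_).trans tsum_zero
    linear_combination powDivGamma (e + α + α + α * k) t * hrec k
  linear_combination htail

end FractionalPowerSeries

lemma abs_two_mul_neg_one_pow_add_neg_two_pow_le (n : ℕ) :
    |2 * (-1 : ℝ) ^ n + (-2) ^ n| ≤ 3 * 2 ^ n := by
  have : (1 : ℝ) ≤ 2 ^ n := one_le_pow₀ one_le_two
  calc |2 * (-1 : ℝ) ^ n + (-2) ^ n| ≤ |2 * (-1 : ℝ) ^ n| + |(-2 : ℝ) ^ n| := abs_add_le _ _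
    _ = 2 + 2 ^ n := by simp [abs_mul]
    _ ≤ 3 * 2 ^ n := by linarith

/-- With `aₙ = 2(−1)ⁿ + (−2)ⁿ`, the tail `z(t) = ∑_{n=m+1}^∞ aₙ t^{αn}/Γ(αn+1)` satisfies
`z(0) = 0`, `D^α z(t) → 0` as `t → 0⁺`, and for every `t > 0`
`D^α(D^α z)(t) + 3D^α z(t) + 2z(t) = F(t)`, where
`F(t) = −(2a_{m−1} + 3a_m) t^{(m−1)α}/Γ((m−1)α+1) − 2a_m t^{mα}/Γ(mα+1)`. -/
theorem three_term_tail_equation (α : ℝ) (m : ℕ)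
    (hα0 : 0 < α) (hα1 : α < 1) (hm : 0 < m) (hmα : 1 < m * α)
    (a : ℕ → ℝ) (ha : ∀ n : ℕ, a n = 2 * (-1 : ℝ) ^ n + (-2 : ℝ) ^ n)
    (z : ℝ → ℝ)
    (hz : ∀ t : ℝ, z t = ∑' k : ℕ,
      a (m + 1 + k) * t ^ (α * ((m : ℝ) + 1 + k)) /
        Real.Gamma (α * ((m : ℝ) + 1 + k) + 1))
    (F : ℝ → ℝ)
    (hF : ∀ t : ℝ, F t =
      -(2 * a (m - 1) + 3 * a m) * t ^ (α * ((m : ℝ) - 1)) /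
          Real.Gamma (α * ((m : ℝ) - 1) + 1) -
        2 * a m * t ^ (α * m) / Real.Gamma (α * m + 1)) :
    z 0 = 0 ∧
    Filter.Tendsto (fun t => caputoDeriv α z t) (nhdsWithin 0 (Set.Ioi 0)) (nhds 0) ∧
    ∀ t : ℝ, 0 < t →
      caputoDeriv α (caputoDeriv α z) t + 3 * caputoDeriv α z t + 2 * z t = F t := by
  set c : ℕ → ℝ := fun k => a (m + 1 + k)
  set e : ℝ := α * ((m : ℝ) - 1)
  have he : 0 ≤ e := mul_nonneg hα0.le (by simp [Nat.one_le_cast.mpr hm])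
  have hc (k : ℕ) : |c k| ≤ 3 * 2 ^ (m + 1) * 2 ^ k := by
    rw [mul_assoc, ← pow_add, show c k = a (m + 1 + k) from rfl, ha]
    exact abs_two_mul_neg_one_pow_add_neg_two_pow_le _
  have hrec (k : ℕ) : c (k + 2) + 3 * c (k + 1) + 2 * c k = 0 := by
    simp only [c, ha, ← add_assoc, pow_succ]
    ring
  have hz' : z = fractionalPowerSeries α (e + α + α) c := funext fun t => by
    rw [hz t, fractionalPowerSeries]
    refine tsum_congr fun k => ?_
    simp only [powDivGamma, c, e]
    ring_nf
  have hDz : EqOn (caputoDeriv α z) (fractionalPowerSeries α (e + α) c) (Ioi 0) := fun t ht => by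
    rw [hz', caputoDeriv_fractionalPowerSeries hα0 hα1 (by linarith) zero_le_two hc ht,
      add_sub_cancel_right]
  refine ⟨by rw [hz']; exact fractionalPowerSeries_apply_zero hα0.le (by positivity), ?_,
    fun t ht => ?_⟩
  · exact (tendsto_fractionalPowerSeries_nhdsGT_zero hα0 (by positivity) zero_le_two hc).congr'
      (eventually_nhdsWithin_of_forall fun t ht => (hDz ht).symm)
  · rw [caputoDeriv_congr hDz ht.le, caputoDeriv_fractionalPowerSeries hα0 hα1 (by linarith)
      zero_le_two hc ht, add_sub_cancel_right, hDz ht, hz',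
      fractionalPowerSeries_linear_recurrence hα0 he zero_le_two hc hrec ht, hF]
    obtain ⟨n, rfl⟩ : ∃ n, m = n + 1 := Nat.exists_eq_add_one.mpr hm
    simp only [c, e, ha, powDivGamma, Nat.add_sub_cancel, pow_succ]
    ring_nf
end
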